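/- arXiv:2005.02974 — 17 statements merged into one kernel-verified Lean document; each statement's English description precedes it below -/
import Mathlib

section
/- Let A, E, S, T be n×n complex matrices with E invertible and Hermitian. If S and T are both {1,3^E}-inverses of A, i.e., A·S·A = A, (E·A·S)^* = E·A·S, A·T·A = A, and (E·A·T)^* = E·A·T, then A·S = A·T. -/
open Matrix

/-- If S and T are both {1,3^E}-inverses of A, then A·S = A·T. -/
theorem stmt_0 {n : ℕ} (A E S T : Matrix (Fin n) (Fin n) ℂ)
    (hE : IsUnit E) (hEherm : Eᴴ = E)
    (hS1 : A * S * A = A) (hS3 : (E * A * S)ᴴ = E * A * S)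
    (hT1 : A * T * A = A) (hT3 : (E * A * T)ᴴ = E * A * T) :
    A * S = A * T := by
  have key : E * (A * S) = E * (A * T) := by
    calc E * (A * S) = E * (A * T * A) * S := by rw [hT1]; noncomm_ring
      _ = (E * A * T) * (A * S) := by noncomm_ring
      _ = (E * A * T)ᴴ * (A * S) := by rw [hT3]
      _ = Tᴴ * Aᴴ * (E * A * S) := by
            simp only [conjTranspose_mul, hEherm]; noncomm_ring
      _ = Tᴴ * Aᴴ * (E * A * S)ᴴ := by rw [hS3]
      _ = Tᴴ * (A * S * A)ᴴ * E := by
            simp only [conjTranspose_mul, hEherm]; noncomm_ring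
      _ = Tᴴ * Aᴴ * E := by rw [hS1]
      _ = (E * A * T)ᴴ := by
            simp only [conjTranspose_mul, hEherm]; noncomm_ring
      _ = E * (A * T) := by rw [hT3]; noncomm_ring
  have := congrArg (fun M => (↑hE.unit⁻¹ : Matrix (Fin n) (Fin n) ℂ) * M) key
  simpa [← mul_assoc, Matrix.nonsing_inv_mul E ((Matrix.isUnit_iff_isUnit_det E).mp hE)] using this
end

section
/- Let A, X be n×n complex matrices. (i) If A·X^2 = X, then A·X = A^m·X^m for every positive integer m. (ii) If in addition X·A^(k+1) = A^k for some positive integer k, then X·A·X = X and the column space of X equals the column space of A^k. -/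
open Matrix

/-- (i) If A·X² = X then A·X = Aᵐ·Xᵐ for all positive m.
(ii) If moreover X·A^(k+1) = A^k for a positive integer k, then X·A·X = X and
the column space of X equals the column space of A^k. -/
theorem stmt_2 {n : ℕ} (A X : Matrix (Fin n) (Fin n) ℂ)
    (h7 : A * X ^ 2 = X) :
    (∀ m : ℕ, 0 < m → A * X = A ^ m * X ^ m) ∧
    (∀ k : ℕ, 0 < k → X * A ^ (k + 1) = A ^ k →
      X * A * X = X ∧
      LinearMap.range X.mulVecLin = LinearMap.range (A ^ k).mulVecLin) := by
  have key : ∀ j : ℕ, A ^ j * X ^ (j + 1) = X := by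
    intro j
    induction j with
    | zero => simp
    | succ j ih =>
      have hx : A * X ^ (j + 2) = X ^ (j + 1) := by
        rw [show j + 2 = 2 + j by omega, pow_add, ← mul_assoc, h7, ← pow_succ']
      rw [pow_succ, mul_assoc, hx]
      exact ih
  have part1 : ∀ m : ℕ, 0 < m → A * X = A ^ m * X ^ m := by
    intro m hm
    obtain ⟨j, rfl⟩ := Nat.exists_eq_add_of_lt hm
    rw [zero_add]
    calc A * X = A * (A ^ j * X ^ (j + 1)) := by rw [key j]
    _ = A ^ (j + 1) * X ^ (j + 1) := by rw [pow_succ' A, mul_assoc]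
  refine ⟨part1, fun k hk h8 => ?_⟩
  have hXAX : X * A * X = X := by
    calc X * A * X = X * (A * X) := by rw [mul_assoc]
    _ = X * (A ^ (k + 1) * X ^ (k + 1)) := by rw [← part1 (k + 1) k.succ_pos]
    _ = (X * A ^ (k + 1)) * X ^ (k + 1) := (mul_assoc _ _ _).symm
    _ = A ^ k * X ^ (k + 1) := by rw [h8]
    _ = X := key k
  refine ⟨hXAX, le_antisymm ?_ ?_⟩
  · conv_lhs => rw [← key k, mulVecLin_mul]
    exact LinearMap.range_comp_le_range _ _
  · conv_lhs => rw [← h8, mulVecLin_mul]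
    exact LinearMap.range_comp_le_range _ _
end

section
/- Let A, E be n×n complex matrices with E invertible and Hermitian, and let k be a positive integer with rank(A^k) = rank(A^(k+1)). For an n×n complex matrix X, the following are equivalent: (i) X is an E-weighted core-EP inverse of A with exponent k, i.e., X·A^(k+1) = A^k, A·X^2 = X, and (E·A·X)^* = E·A·X; (ii) X·A·X = X, the column space of X equals the column space of A^k, and the column space of X^* equals the column space of E·A^k. -/
open Matrix

private lemma range_le_iff_factor {n : ℕ} (M N : Matrix (Fin n) (Fin n) ℂ) :
    LinearMap.range M.mulVecLin ≤ LinearMap.range N.mulVecLin ↔ ∃ C, M = N * C := by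
  constructor
  · intro h
    have hc : ∀ j, ∃ c, N.mulVec c = M.mulVec (Pi.single j 1) :=
      fun j => h ⟨Pi.single j 1, rfl⟩
    choose c hc using hc
    refine ⟨Matrix.of (fun i j => c j i), ?_⟩
    ext i j
    have := congrFun (hc j) i
    simp [mulVec, dotProduct, Pi.single_apply, mul_comm] at this
    simp [Matrix.mul_apply, ← this, mulVec, dotProduct]
  · rintro ⟨C, rfl⟩
    rw [Matrix.mulVecLin_mul]
    exact LinearMap.range_comp_le_range _ _

/-- Characterization of the E-weighted core-EP inverse via range conditions. -/
theorem stmt_3 {n : ℕ} (A E : Matrix (Fin n) (Fin n) ℂ) (k : ℕ) (hk : 0 < k)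
    (hE : IsUnit E) (hEherm : Eᴴ = E)
    (hrank : (A ^ k).rank = (A ^ (k + 1)).rank)
    (X : Matrix (Fin n) (Fin n) ℂ) :
    (X * A ^ (k + 1) = A ^ k ∧ A * X ^ 2 = X ∧ (E * A * X)ᴴ = E * A * X) ↔
    (X * A * X = X ∧
     LinearMap.range X.mulVecLin = LinearMap.range (A ^ k).mulVecLin ∧
     LinearMap.range Xᴴ.mulVecLin = LinearMap.range (E * A ^ k).mulVecLin) := by
  have hEdet : IsUnit E.det := (Matrix.isUnit_iff_isUnit_det E).mp hE
  have hEEi : E * E⁻¹ = 1 := Matrix.mul_nonsing_inv E hEdet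
  constructor
  · rintro ⟨h1, h2, h3⟩
    have hstep : ∀ m : ℕ, X ^ (m + 1) = A * X ^ (m + 2) := by
      intro m
      rw [show m + 2 = 2 + m from add_comm _ _, pow_add X 2 m, ← mul_assoc, h2, ← pow_succ']
    have haux : ∀ m : ℕ, X = A ^ m * X ^ (m + 1) := by
      intro m
      induction m with
      | zero => simp
      | succ m ih =>
        calc X = A ^ m * X ^ (m + 1) := ih
          _ = A ^ m * (A * X ^ (m + 2)) := by rw [← hstep]
          _ = A ^ (m + 1) * X ^ (m + 2) := by rw [pow_succ A m]; simp only [mul_assoc]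
    have hXAX : X * A * X = X := by
      have key : ∀ m : ℕ, X * A * X = X * A ^ (m + 1) * X ^ (m + 1) := by
        intro m
        induction m with
        | zero => simp
        | succ m ih =>
          calc X * A * X = X * A ^ (m + 1) * X ^ (m + 1) := ih
            _ = X * A ^ (m + 1) * (A * X ^ (m + 2)) := by rw [← hstep]
            _ = X * A ^ (m + 2) * X ^ (m + 2) := by
                rw [pow_succ A (m + 1)]; simp only [mul_assoc]
      calc X * A * X = X * A ^ (k + 1) * X ^ (k + 1) := key k
        _ = A ^ k * X ^ (k + 1) := by rw [h1]
        _ = X := (haux k).symm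
    have hAX : A * X = A ^ k * X ^ k := by
      obtain ⟨m, rfl⟩ : ∃ m, k = m + 1 := ⟨k - 1, (Nat.succ_pred_eq_of_pos hk).symm⟩
      calc A * X = A * (A ^ m * X ^ (m + 1)) := by rw [← haux]
        _ = A ^ (m + 1) * X ^ (m + 1) := by rw [← mul_assoc, ← pow_succ']
    have hherm : Xᴴ * Aᴴ * E = E * A * X := by
      calc Xᴴ * Aᴴ * E = Xᴴ * (Aᴴ * Eᴴ) := by rw [hEherm, mul_assoc]
        _ = (E * A * X)ᴴ := by rw [conjTranspose_mul, conjTranspose_mul]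
        _ = E * A * X := h3
    have hAXAk : A * X * A ^ k = A ^ k := by
      calc A * X * A ^ k = A * X * (X * A ^ (k + 1)) := by rw [h1]
        _ = A * X ^ 2 * A ^ (k + 1) := by rw [sq]; simp only [mul_assoc]
        _ = X * A ^ (k + 1) := by rw [h2]
        _ = A ^ k := h1
    refine ⟨hXAX, ?_, ?_⟩
    · apply le_antisymm
      · rw [range_le_iff_factor]
        exact ⟨X ^ (k + 1), haux k⟩
      · rw [range_le_iff_factor]
        exact ⟨A ^ (k + 1), h1.symm⟩
    · apply le_antisymm
      · rw [range_le_iff_factor]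
        refine ⟨X ^ k * E⁻¹ * Xᴴ, ?_⟩
        calc Xᴴ = (X * A * X)ᴴ := by rw [hXAX]
          _ = Xᴴ * Aᴴ * Xᴴ := by simp only [conjTranspose_mul, mul_assoc]
          _ = Xᴴ * Aᴴ * (E * E⁻¹) * Xᴴ := by rw [hEEi, mul_one]
          _ = (Xᴴ * Aᴴ * E) * (E⁻¹ * Xᴴ) := by simp only [mul_assoc]
          _ = E * (A * X) * (E⁻¹ * Xᴴ) := by rw [hherm]; simp only [mul_assoc]
          _ = E * (A ^ k * X ^ k) * (E⁻¹ * Xᴴ) := by rw [hAX]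
          _ = E * A ^ k * (X ^ k * E⁻¹ * Xᴴ) := by simp only [mul_assoc]
      · rw [range_le_iff_factor]
        refine ⟨Aᴴ * E * A ^ k, ?_⟩
        calc E * A ^ k = E * (A * X * A ^ k) := by rw [hAXAk]
          _ = (E * A * X) * A ^ k := by simp only [mul_assoc]
          _ = (Xᴴ * Aᴴ * E) * A ^ k := by rw [hherm]
          _ = Xᴴ * (Aᴴ * E * A ^ k) := by simp only [mul_assoc]
  · rintro ⟨g1, g2, g3⟩
    obtain ⟨B, hB⟩ := (range_le_iff_factor X (A ^ k)).mp g2.le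
    obtain ⟨C, hC⟩ := (range_le_iff_factor (A ^ k) X).mp g2.ge
    obtain ⟨V, hV⟩ := (range_le_iff_factor (E * A ^ k) Xᴴ).mp g3.ge
    have hle : LinearMap.range (A ^ (k+1)).mulVecLin ≤ LinearMap.range (A ^ k).mulVecLin := by
      rw [range_le_iff_factor]; exact ⟨A, (pow_succ A k).symm⟩
    have hreq : LinearMap.range (A ^ (k+1)).mulVecLin = LinearMap.range (A ^ k).mulVecLin :=
      Submodule.eq_of_le_of_finrank_le hle (le_of_eq hrank)
    obtain ⟨W, hW⟩ := (range_le_iff_factor (A ^ k) (A ^ (k+1))).mp hreq.ge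
    have c1 : X * A ^ (k + 1) = A ^ k := by
      calc X * A ^ (k + 1) = X * A * A ^ k := by rw [pow_succ']; simp only [mul_assoc]
        _ = X * A * (X * C) := by rw [← hC]
        _ = (X * A * X) * C := by simp only [mul_assoc]
        _ = X * C := by rw [g1]
        _ = A ^ k := hC.symm
    have hAXAk : A * X * A ^ k = A ^ k := by
      calc A * X * A ^ k = A * X * (A ^ (k + 1) * W) := by rw [← hW]
        _ = A * (X * A ^ (k + 1)) * W := by simp only [mul_assoc]
        _ = A * A ^ k * W := by rw [c1]
        _ = A ^ (k + 1) * W := by rw [← pow_succ']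
        _ = A ^ k := hW.symm
    have c2 : A * X ^ 2 = X := by
      calc A * X ^ 2 = A * X * X := by rw [sq]; simp only [mul_assoc]
        _ = A * X * (A ^ k * B) := by rw [← hB]
        _ = (A * X * A ^ k) * B := by simp only [mul_assoc]
        _ = A ^ k * B := by rw [hAXAk]
        _ = X := hB.symm
    have hadj : (A ^ k)ᴴ * E = Vᴴ * X := by
      calc (A ^ k)ᴴ * E = (A ^ k)ᴴ * Eᴴ := by rw [hEherm]
        _ = (E * A ^ k)ᴴ := (conjTranspose_mul E (A ^ k)).symm
        _ = (Xᴴ * V)ᴴ := by rw [hV]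
        _ = Vᴴ * X := by rw [conjTranspose_mul, conjTranspose_conjTranspose]
    have h5 : (A ^ k)ᴴ * E * (A * X) = (A ^ k)ᴴ * E := by
      calc (A ^ k)ᴴ * E * (A * X) = Vᴴ * (X * A * X) := by rw [hadj]; simp only [mul_assoc]
        _ = Vᴴ * X := by rw [g1]
        _ = (A ^ k)ᴴ * E := hadj.symm
    have hPfac : A * X = A ^ k * (A * B) := by
      calc A * X = A * (A ^ k * B) := by rw [← hB]
        _ = (A * A ^ k) * B := by simp only [mul_assoc]
        _ = (A ^ k * A) * B := by rw [← pow_succ', pow_succ]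
        _ = A ^ k * (A * B) := by simp only [mul_assoc]
    have h6 : (A * X)ᴴ * E * A ^ k = E * A ^ k := by
      have h5' := congrArg conjTranspose h5
      simp only [conjTranspose_mul, conjTranspose_conjTranspose, hEherm, mul_assoc] at h5' ⊢
      exact h5'
    have h7 : (A * X)ᴴ * E * (A * X) = E * (A * X) := by
      calc (A * X)ᴴ * E * (A * X) = (A * X)ᴴ * E * (A ^ k * (A * B)) := by rw [← hPfac]
        _ = ((A * X)ᴴ * E * A ^ k) * (A * B) := by simp only [mul_assoc]
        _ = E * A ^ k * (A * B) := by rw [h6]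
        _ = E * (A ^ k * (A * B)) := by simp only [mul_assoc]
        _ = E * (A * X) := by rw [← hPfac]
    have c3 : (E * A * X)ᴴ = E * A * X := by
      have hHerm : ((A * X)ᴴ * E * (A * X))ᴴ = (A * X)ᴴ * E * (A * X) := by
        simp only [conjTranspose_mul, conjTranspose_conjTranspose, hEherm, mul_assoc]
      calc (E * A * X)ᴴ = (E * (A * X))ᴴ := by rw [mul_assoc]
        _ = ((A * X)ᴴ * E * (A * X))ᴴ := by rw [h7]
        _ = (A * X)ᴴ * E * (A * X) := hHerm
        _ = E * (A * X) := h7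
        _ = E * A * X := by rw [mul_assoc]
    exact ⟨c1, c2, c3⟩
end

section
/- Let A, E be n×n complex matrices with E invertible and Hermitian, let k be a positive integer, and let X be an E-weighted core-EP inverse of A with exponent k (i.e., X·A^(k+1) = A^k, A·X^2 = X, (E·A·X)^* = E·A·X). Then for every integer m ≥ k: (i) X^m is a {1,3^E}-inverse of A^m, i.e., A^m·X^m·A^m = A^m and (E·A^m·X^m)^* = E·A^m·X^m; (ii) the matrix Y = X^(m+1)·A^m satisfies Y·A^(k+1) = A^k, Y·A·Y = Y, and A·Y = Y·A (so Y is the Drazin inverse of A). -/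
open Matrix

/-- If X is an E-weighted core-EP inverse of A with exponent k, then for all m ≥ k:
(i) Xᵐ is a {1,3^E}-inverse of Aᵐ; (ii) Y = X^(m+1)·Aᵐ satisfies Y·A^(k+1) = A^k,
Y·A·Y = Y and A·Y = Y·A. -/
theorem stmt_4 {n : ℕ} (A E X : Matrix (Fin n) (Fin n) ℂ) (k : ℕ) (hk : 0 < k)
    (hE : IsUnit E) (hEherm : Eᴴ = E)
    (h6 : X * A ^ (k + 1) = A ^ k) (h7 : A * X ^ 2 = X)
    (h3 : (E * A * X)ᴴ = E * A * X) :
    ∀ m : ℕ, k ≤ m →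
      (A ^ m * X ^ m * A ^ m = A ^ m ∧ (E * A ^ m * X ^ m)ᴴ = E * A ^ m * X ^ m) ∧
      (X ^ (m + 1) * A ^ m * A ^ (k + 1) = A ^ k ∧
       X ^ (m + 1) * A ^ m * A * (X ^ (m + 1) * A ^ m) = X ^ (m + 1) * A ^ m ∧
       A * (X ^ (m + 1) * A ^ m) = X ^ (m + 1) * A ^ m * A) := by
  have hX2 : A * (X * X) = X := by rw [← sq]; exact h7
  -- L1 : Aʲ⁺¹ Xʲ⁺¹ = A X
  have L1 : ∀ j : ℕ, A ^ (j + 1) * X ^ (j + 1) = A * X := by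
    intro j
    induction j with
    | zero => simp
    | succ j ih =>
      have : A ^ (j + 2) * X ^ (j + 2) = A ^ (j + 1) * X ^ (j + 1) := by
        calc A ^ (j + 2) * X ^ (j + 2)
            = A ^ (j + 1) * ((A * (X * X)) * X ^ j) := by
              have hx : X ^ (j + 2) = X * X * X ^ j := by
                rw [show j + 2 = 2 + j by ring, pow_add, sq]
              rw [pow_succ A (j+1), hx]; noncomm_ring
          _ = A ^ (j + 1) * X ^ (j + 1) := by rw [hX2, ← pow_succ']
      rw [this, ih]
  -- L2 : Xʲ A^(k+j) = A^k
  have L2 : ∀ j : ℕ, X ^ j * A ^ (k + j) = A ^ k := by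
    intro j
    induction j with
    | zero => simp
    | succ j ih =>
      calc X ^ (j + 1) * A ^ (k + (j + 1))
          = X ^ j * ((X * A ^ (k + 1)) * A ^ j) := by
            rw [pow_succ X j, show k + (j + 1) = (k + 1) + j by ring, pow_add]
            noncomm_ring
        _ = X ^ j * A ^ (k + j) := by rw [h6, ← pow_add]
        _ = A ^ k := ih
  -- L3 : A X A^k = A^k
  have L3 : A * X * A ^ k = A ^ k := by
    calc A * X * A ^ k = A * (X * X) * A ^ (k + 1) := by rw [← h6]; noncomm_ring
      _ = X * A ^ (k + 1) := by rw [hX2]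
      _ = A ^ k := h6
  intro m hm
  obtain ⟨d, hd⟩ : ∃ d, m = k + d := ⟨m - k, by omega⟩
  -- L4 : A X A^m = A^m
  have L4 : A * X * A ^ m = A ^ m := by
    rw [hd, pow_add, ← mul_assoc, L3]
  obtain ⟨p, hp⟩ : ∃ p, m = p + 1 := ⟨m - 1, by omega⟩
  -- A^m X^m = A X
  have hAXm : A ^ m * X ^ m = A * X := by rw [hp]; exact L1 p
  -- L5 : A X^(m+1) = X^m
  have L5 : A * X ^ (m + 1) = X ^ m := by
    calc A * X ^ (m + 1) = (A * (X * X)) * X ^ p := by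
          rw [hp, show p + 1 + 1 = 2 + p by ring, pow_add, sq]; noncomm_ring
      _ = X ^ m := by rw [hX2, hp, ← pow_succ']
  -- Y A = X^m A^m
  have hYA : X ^ (m + 1) * A ^ (m + 1) = X ^ m * A ^ m := by
    calc X ^ (m + 1) * A ^ (m + 1)
        = X ^ m * ((X * A ^ (k + 1)) * A ^ d) := by
          have ha : A ^ (m + 1) = A ^ (k + 1) * A ^ d := by
            rw [show m + 1 = (k + 1) + d by omega, pow_add]
          rw [pow_succ X m, ha]; noncomm_ring
      _ = X ^ m * A ^ m := by rw [h6, hd, ← pow_add]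
  refine ⟨⟨?_, ?_⟩, ?_, ?_, ?_⟩
  · rw [hAXm]; exact L4
  · rw [mul_assoc E, hAXm, ← mul_assoc]; exact h3
  · rw [mul_assoc, ← pow_add, show m + (k + 1) = k + (m + 1) by ring]
    exact L2 (m + 1)
  · calc X ^ (m + 1) * A ^ m * A * (X ^ (m + 1) * A ^ m)
        = X ^ (m + 1) * (A ^ (m + 1) * X ^ (m + 1)) * A ^ m := by
          rw [pow_succ A m]; noncomm_ring
      _ = X ^ (m + 1) * (A * X * A ^ m) := by rw [L1 m]; noncomm_ring
      _ = X ^ (m + 1) * A ^ m := by rw [L4]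
  · calc A * (X ^ (m + 1) * A ^ m) = X ^ m * A ^ m := by rw [← mul_assoc, L5]
      _ = X ^ (m + 1) * A ^ (m + 1) := hYA.symm
      _ = X ^ (m + 1) * A ^ m * A := by rw [pow_succ A m, mul_assoc]
end

section
/- Let A, E be n×n complex matrices with E invertible and Hermitian, and let k be a positive integer. If X and Y are both E-weighted core-EP inverses of A with exponent k, i.e., X·A^(k+1) = A^k, A·X^2 = X, (E·A·X)^* = E·A·X and Y·A^(k+1) = A^k, A·Y^2 = Y, (E·A·Y)^* = E·A·Y, then X = Y. -/
open Matrix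

/-- Uniqueness of the E-weighted core-EP inverse. -/
theorem stmt_5 {n : ℕ} (A E X Y : Matrix (Fin n) (Fin n) ℂ) (k : ℕ) (hk : 0 < k)
    (hE : IsUnit E) (hEherm : Eᴴ = E)
    (hX6 : X * A ^ (k + 1) = A ^ k) (hX7 : A * X ^ 2 = X)
    (hX3 : (E * A * X)ᴴ = E * A * X)
    (hY6 : Y * A ^ (k + 1) = A ^ k) (hY7 : A * Y ^ 2 = Y)
    (hY3 : (E * A * Y)ᴴ = E * A * Y) :
    X = Y := by
  -- general power identity: M * Z^2 = Z → M^m * Z^(m+1) = Z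
  have hpow : ∀ (Z : Matrix (Fin n) (Fin n) ℂ), A * Z ^ 2 = Z →
      ∀ m : ℕ, A ^ m * Z ^ (m + 1) = Z := by
    intro Z h m
    induction m with
    | zero => simp
    | succ m ih =>
      calc A ^ (m + 1) * Z ^ (m + 2)
          = (A ^ m * A) * (Z ^ 2 * Z ^ m) := by
            rw [pow_succ]; congr 1; rw [show m + 2 = 2 + m by omega, pow_add]
        _ = A ^ m * ((A * Z ^ 2) * Z ^ m) := by simp only [mul_assoc]
        _ = A ^ m * (Z * Z ^ m) := by rw [h]
        _ = A ^ m * Z ^ (m + 1) := by rw [pow_succ']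
        _ = Z := ih
  have h1 : A ^ k * X ^ (k + 1) = X := hpow X hX7 k
  have h1' : A ^ k * Y ^ (k + 1) = Y := hpow Y hY7 k
  -- A * X * A ^ k = A ^ k, likewise for Y
  have h2 : ∀ Z : Matrix (Fin n) (Fin n) ℂ, Z * A ^ (k + 1) = A ^ k → A * Z ^ 2 = Z →
      A * Z * A ^ k = A ^ k := by
    intro Z h6 h7
    calc A * Z * A ^ k = A * Z * (Z * A ^ (k + 1)) := by rw [h6]
      _ = (A * Z ^ 2) * A ^ (k + 1) := by rw [sq]; simp only [mul_assoc]
      _ = Z * A ^ (k + 1) := by rw [h7]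
      _ = A ^ k := h6
  have h2X := h2 X hX6 hX7
  have h2Y := h2 Y hY6 hY7
  -- A * Z = A^(k+1) * Z^(k+1)
  have h3 : ∀ Z : Matrix (Fin n) (Fin n) ℂ, A ^ k * Z ^ (k + 1) = Z →
      A * Z = A ^ (k + 1) * Z ^ (k + 1) := by
    intro Z h1
    rw [pow_succ', mul_assoc, h1]
  have h3X := h3 X h1
  have h3Y := h3 Y h1'
  -- A * W * (A * Z) = A * Z whenever A*W*A^k = A^k and A*Z = A^(k+1)*Z^(k+1)
  have h4 : ∀ W Z : Matrix (Fin n) (Fin n) ℂ, A * W * A ^ k = A ^ k →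
      A * Z = A ^ (k + 1) * Z ^ (k + 1) → A * W * (A * Z) = A * Z := by
    intro W Z hW hZ
    calc A * W * (A * Z) = A * W * (A ^ (k + 1) * Z ^ (k + 1)) := by rw [hZ]
      _ = (A * W * A ^ (k + 1)) * Z ^ (k + 1) := by simp only [mul_assoc]
      _ = (A * W * A ^ k * A) * Z ^ (k + 1) := by rw [pow_succ]; simp only [mul_assoc]
      _ = A ^ (k + 1) * Z ^ (k + 1) := by rw [hW, ← pow_succ]
      _ = A * Z := hZ.symm
  have h4YX : A * Y * (A * X) = A * X := h4 Y X h2Y h3X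
  have h4XY : A * X * (A * Y) = A * Y := h4 X Y h2X h3Y
  have h4XX : A * X * (A * X) = A * X := h4 X X h2X h3X
  -- (A*X)ᴴ * E = E * (A * X)
  have hX3' : (E * (A * X))ᴴ = E * (A * X) := by rw [← mul_assoc]; exact hX3
  have hY3' : (E * (A * Y))ᴴ = E * (A * Y) := by rw [← mul_assoc]; exact hY3
  have h6 : (A * X)ᴴ * E = E * (A * X) := by
    calc (A * X)ᴴ * E = (A * X)ᴴ * Eᴴ := by rw [hEherm]
      _ = (E * (A * X))ᴴ := (conjTranspose_mul _ _).symm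
      _ = E * (A * X) := hX3'
  -- take conjugate transpose of E * (A*Y) * (A*X) = E * (A*X)
  have h7 : E * (A * Y * (A * X)) = E * (A * X) := by rw [h4YX]
  have h8 : (A * X)ᴴ * (E * (A * Y)) = E * (A * X) := by
    calc (A * X)ᴴ * (E * (A * Y)) = (A * X)ᴴ * (E * (A * Y))ᴴ := by rw [hY3']
      _ = ((E * (A * Y)) * (A * X))ᴴ := (conjTranspose_mul _ _).symm
      _ = (E * (A * Y * (A * X)))ᴴ := by simp only [mul_assoc]
      _ = (E * (A * X))ᴴ := by rw [h4YX]
      _ = E * (A * X) := hX3'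
  have h9 : E * (A * X) = E * (A * Y) := by
    have : E * (A * X) * (A * Y) = E * (A * X) := by
      rw [← h6, mul_assoc, h8]; exact h6.symm
    rw [← this, mul_assoc, h4XY]
  have hAXY : A * X = A * Y := hE.mul_left_cancel h9
  -- X = Y * (A * X)
  have hXeq : X = Y * (A * X) := by
    calc X = A ^ k * X ^ (k + 1) := h1.symm
      _ = (Y * A ^ (k + 1)) * X ^ (k + 1) := by rw [hY6]
      _ = Y * (A ^ (k + 1) * X ^ (k + 1)) := by rw [mul_assoc]
      _ = Y * (A * X) := by rw [← h3X]
  have hYeq : Y = X * (A * X) := by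
    calc Y = A ^ k * Y ^ (k + 1) := h1'.symm
      _ = (X * A ^ (k + 1)) * Y ^ (k + 1) := by rw [hX6]
      _ = X * (A ^ (k + 1) * Y ^ (k + 1)) := by rw [mul_assoc]
      _ = X * (A * Y) := by rw [← h3Y]
      _ = X * (A * X) := by rw [hAXY]
  calc X = Y * (A * X) := hXeq
    _ = (X * (A * X)) * (A * X) := by rw [← hYeq]
    _ = X * (A * X * (A * X)) := by simp only [mul_assoc]
    _ = X * (A * X) := by rw [h4XX]
    _ = Y := hYeq.symm
end

section
/- Let A, E be n×n complex matrices with E invertible and Hermitian, let k and m be positive integers with m ≥ k, let D be a k-Drazin inverse of A (D·A^(k+1) = A^k, D·A·D = D, A·D = D·A), and let X be a {1,3^E}-inverse of A^m (A^m·X·A^m = A^m and (E·A^m·X)^* = E·A^m·X). Then the matrix W = D·A^m·X is the E-weighted core-EP inverse of A with exponent k, i.e., W·A^(k+1) = A^k, A·W^2 = W, and (E·A·W)^* = E·A·W. -/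
open Matrix

/-- Construction of the E-weighted core-EP inverse from a Drazin inverse and a
{1,3^E}-inverse of A^m. -/
theorem stmt_6 {n : ℕ} (A E D X : Matrix (Fin n) (Fin n) ℂ) (k m : ℕ)
    (hk : 0 < k) (hm : 0 < m) (hkm : k ≤ m)
    (hE : IsUnit E) (hEherm : Eᴴ = E)
    (hD1 : D * A ^ (k + 1) = A ^ k) (hD2 : D * A * D = D) (hD3 : A * D = D * A)
    (hX1 : A ^ m * X * A ^ m = A ^ m) (hX3 : (E * A ^ m * X)ᴴ = E * A ^ m * X) :
    D * A ^ m * X * A ^ (k + 1) = A ^ k ∧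
    A * (D * A ^ m * X) ^ 2 = D * A ^ m * X ∧
    (E * A * (D * A ^ m * X))ᴴ = E * A * (D * A ^ m * X) := by
  have hAD : Commute A D := hD3
  have hcomm : ∀ a b : ℕ, A ^ a * D ^ b = D ^ b * A ^ a :=
    fun a b => (hAD.pow_pow a b)
  -- D kills one power of A as long as the exponent is > k
  have hstep : ∀ p, k ≤ p → D * A ^ (p + 1) = A ^ p := by
    intro p hp
    induction p with
    | zero => omega
    | succ p ih =>
      rcases eq_or_lt_of_le hp with h | h
      · rw [← h]; exact hD1
      · have hp' : k ≤ p := Nat.lt_succ_iff.mp h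
        calc D * A ^ (p + 1 + 1) = D * A ^ (p + 1) * A := by
              rw [pow_succ, mul_assoc]
          _ = A ^ p * A := by rw [ih hp']
          _ = A ^ (p + 1) := (pow_succ A p).symm
  have hDj : ∀ j p, k ≤ p → D ^ j * A ^ (p + j) = A ^ p := by
    intro j
    induction j with
    | zero => intro p hp; simp
    | succ j ih =>
      intro p hp
      have h1 : p + (j + 1) = (p + j) + 1 := rfl
      calc D ^ (j + 1) * A ^ (p + (j + 1))
          = D ^ j * (D * A ^ ((p + j) + 1)) := by rw [h1, pow_succ, mul_assoc]
        _ = D ^ j * A ^ (p + j) := by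
            rw [hstep (p + j) (le_trans hp (Nat.le_add_right p j))]
        _ = A ^ p := ih p hp
  -- rewrite A^(k+1) through the Drazin inverse
  have e1 : A ^ (k + 1) = A ^ m * (A * D ^ (m - k)) := by
    have h := hDj (m - k) (k + 1) (Nat.le_succ_of_le le_rfl)
    have h2 : (k + 1) + (m - k) = m + 1 := by omega
    rw [h2] at h
    calc A ^ (k + 1) = D ^ (m - k) * A ^ (m + 1) := h.symm
      _ = A ^ (m + 1) * D ^ (m - k) := (hcomm (m + 1) (m - k)).symm
      _ = A ^ m * A * D ^ (m - k) := by rw [pow_succ]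
      _ = A ^ m * (A * D ^ (m - k)) := by rw [mul_assoc]
  have hfin : D ^ (m - k) * A ^ m = A ^ k := by
    have h := hDj (m - k) k le_rfl
    rwa [show k + (m - k) = m from by omega] at h
  have goal1 : D * A ^ m * X * A ^ (k + 1) = A ^ k := by
    calc D * A ^ m * X * A ^ (k + 1)
        = D * (A ^ m * X * A ^ m) * (A * D ^ (m - k)) := by
          rw [e1]; noncomm_ring
      _ = D * A ^ m * (A * D ^ (m - k)) := by rw [hX1]
      _ = D * A ^ (m + 1) * D ^ (m - k) := by rw [pow_succ]; noncomm_ring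
      _ = A ^ m * D ^ (m - k) := by rw [hstep m hkm]
      _ = D ^ (m - k) * A ^ m := hcomm m (m - k)
      _ = A ^ k := hfin
  have hAmD : A * D * A ^ m = A ^ m := by
    calc A * D * A ^ m = D * (A * A ^ m) := by rw [hD3, mul_assoc]
      _ = D * A ^ (m + 1) := by rw [← pow_succ']
      _ = A ^ m := hstep m hkm
  have goal2 : A * (D * A ^ m * X) ^ 2 = D * A ^ m * X := by
    calc A * (D * A ^ m * X) ^ 2
        = (A * D * A ^ m) * X * (D * A ^ m) * X := by
          rw [sq]; noncomm_ring
      _ = A ^ m * X * (A ^ m * D) * X := by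
          rw [hAmD, (hAD.symm.pow_right m).eq]
      _ = (A ^ m * X * A ^ m) * D * X := by noncomm_ring
      _ = A ^ m * D * X := by rw [hX1]
      _ = D * A ^ m * X := by rw [← (hAD.symm.pow_right m).eq]
  have key3 : E * A * (D * A ^ m * X) = E * A ^ m * X := by
    calc E * A * (D * A ^ m * X) = E * (A * D * A ^ m) * X := by noncomm_ring
      _ = E * A ^ m * X := by rw [hAmD]
  refine ⟨goal1, goal2, ?_⟩
  rw [key3]; exact hX3
end

section
/- Let A, E be n×n complex matrices with E invertible and Hermitian. Then A has a {1,3^E}-inverse (i.e., there exists Y with A·Y·A = A and (E·A·Y)^* = E·A·Y) if and only if there exists an n×n complex matrix Z such that A = Z·A^*·E·A. -/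
open Matrix

/-- A has a {1,3^E}-inverse iff A = Z·Aᴴ·E·A for some Z. -/
theorem stmt_7 {n : ℕ} (A E : Matrix (Fin n) (Fin n) ℂ)
    (hE : IsUnit E) (hEherm : Eᴴ = E) :
    (∃ Y : Matrix (Fin n) (Fin n) ℂ, A * Y * A = A ∧ (E * A * Y)ᴴ = E * A * Y) ↔
    (∃ Z : Matrix (Fin n) (Fin n) ℂ, A = Z * Aᴴ * E * A) := by
  constructor
  · rintro ⟨Y, h1, h3⟩
    have hinv : E⁻¹ * E = 1 :=
      Matrix.nonsing_inv_mul E ((Matrix.isUnit_iff_isUnit_det E).mp hE)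
    refine ⟨E⁻¹ * Yᴴ, ?_⟩
    have key : Yᴴ * Aᴴ * E = E * A * Y := by
      calc Yᴴ * Aᴴ * E = (E * A * Y)ᴴ := by
            simp [conjTranspose_mul, hEherm, Matrix.mul_assoc]
        _ = E * A * Y := h3
    calc A = A * Y * A := h1.symm
      _ = (E⁻¹ * E) * (A * Y * A) := by rw [hinv, Matrix.one_mul]
      _ = E⁻¹ * Yᴴ * Aᴴ * E * A := by
          rw [Matrix.mul_assoc (E⁻¹ * Yᴴ) Aᴴ E, Matrix.mul_assoc E⁻¹ Yᴴ (Aᴴ * E),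
            ← Matrix.mul_assoc Yᴴ Aᴴ E, key]
          simp [Matrix.mul_assoc]
  · rintro ⟨Z, hZ⟩
    have hA' : Aᴴ = Aᴴ * E * A * Zᴴ := by
      conv_lhs => rw [hZ]
      simp [conjTranspose_mul, hEherm, Matrix.mul_assoc]
    have hcomm : Z * Aᴴ = A * Zᴴ := by
      calc Z * Aᴴ = Z * (Aᴴ * E * A * Zᴴ) := by rw [← hA']
        _ = (Z * Aᴴ * E * A) * Zᴴ := by simp [Matrix.mul_assoc]
        _ = A * Zᴴ := by rw [← hZ]
    refine ⟨Zᴴ * E, ?_, ?_⟩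
    · calc A * (Zᴴ * E) * A = (A * Zᴴ) * (E * A) := by simp [Matrix.mul_assoc]
        _ = (Z * Aᴴ) * (E * A) := by rw [hcomm]
        _ = Z * Aᴴ * E * A := by simp [Matrix.mul_assoc]
        _ = A := hZ.symm
    · calc (E * A * (Zᴴ * E))ᴴ = E * (Z * Aᴴ) * E := by
            simp [conjTranspose_mul, hEherm, Matrix.mul_assoc]
        _ = E * A * (Zᴴ * E) := by rw [hcomm]; simp [Matrix.mul_assoc]
end

section
/- Let A, E be n×n complex matrices with E invertible and Hermitian, let k be a positive integer, and let D be a k-Drazin inverse of A (D·A^(k+1) = A^k, D·A·D = D, A·D = D·A). If there exists an n×n complex matrix X such that A^k = X·((A^k)^*)^2·E·A^k, then W = D·A^(2k)·X^*·E is the E-weighted core-EP inverse of A with exponent k, i.e., W·A^(k+1) = A^k, A·W^2 = W, and (E·A·W)^* = E·A·W. -/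
open Matrix

/-- Sufficient condition for the E-weighted core-EP inverse: if
A^k = X·((A^k)ᴴ)²·E·A^k, then W = D·A^(2k)·Xᴴ·E is the E-weighted core-EP
inverse of A with exponent k. -/
theorem stmt_9 {n : ℕ} (A E D X : Matrix (Fin n) (Fin n) ℂ) (k : ℕ) (hk : 0 < k)
    (hE : IsUnit E) (hEherm : Eᴴ = E)
    (hD1 : D * A ^ (k + 1) = A ^ k) (hD2 : D * A * D = D) (hD3 : A * D = D * A)
    (hX : A ^ k = X * ((A ^ k)ᴴ) ^ 2 * E * A ^ k) :
    D * A ^ (2 * k) * Xᴴ * E * A ^ (k + 1) = A ^ k ∧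
    A * (D * A ^ (2 * k) * Xᴴ * E) ^ 2 = D * A ^ (2 * k) * Xᴴ * E ∧
    (E * A * (D * A ^ (2 * k) * Xᴴ * E))ᴴ = E * A * (D * A ^ (2 * k) * Xᴴ * E) := by
  obtain ⟨m, rfl⟩ : ∃ m, k = m + 1 := ⟨k - 1, (Nat.succ_pred_eq_of_pos hk).symm⟩
  -- basic identity from hX, left-associated
  have hX1 : X * (A ^ (m+1))ᴴ * (A ^ (m+1))ᴴ * E * A ^ (m+1) = A ^ (m+1) := by
    rw [sq] at hX
    simp only [← mul_assoc] at hX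
    exact hX.symm
  -- its conjugate transpose
  have hstar1 : (A ^ (m+1))ᴴ * E * A ^ (m+1) * A ^ (m+1) * Xᴴ = (A ^ (m+1))ᴴ := by
    have := congrArg conjTranspose hX1
    simp only [conjTranspose_mul, conjTranspose_conjTranspose, hEherm, ← mul_assoc] at this
    exact this
  -- versions with an arbitrary tail, for rewriting in right-associated form
  have hX_t : ∀ Y : Matrix (Fin n) (Fin n) ℂ,
      X * ((A ^ (m+1))ᴴ * ((A ^ (m+1))ᴴ * (E * (A ^ (m+1) * Y)))) = A ^ (m+1) * Y := by
    intro Y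
    simp only [← mul_assoc]
    rw [hX1]
  have hstar_t : ∀ Y : Matrix (Fin n) (Fin n) ℂ,
      (A ^ (m+1))ᴴ * (E * (A ^ (m+1) * (A ^ (m+1) * (Xᴴ * Y)))) = (A ^ (m+1))ᴴ * Y := by
    intro Y
    simp only [← mul_assoc]
    rw [hstar1]
  -- key identity: P·P·Xᴴ·E·P = P, where P = A^(m+1)
  have hdag : A ^ (m+1) * (A ^ (m+1) * (Xᴴ * (E * A ^ (m+1)))) = A ^ (m+1) := by
    nth_rewrite 1 [← hX1]
    simp only [mul_assoc]
    rw [hstar_t]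
    simp only [← mul_assoc]
    exact hX1
  have hdag_t : ∀ Y : Matrix (Fin n) (Fin n) ℂ,
      A ^ (m+1) * (A ^ (m+1) * (Xᴴ * (E * (A ^ (m+1) * Y)))) = A ^ (m+1) * Y := by
    intro Y
    calc A ^ (m+1) * (A ^ (m+1) * (Xᴴ * (E * (A ^ (m+1) * Y))))
        = (A ^ (m+1) * (A ^ (m+1) * (Xᴴ * (E * A ^ (m+1))))) * Y := by
          simp only [mul_assoc]
      _ = A ^ (m+1) * Y := by rw [hdag]
  -- D absorbs one power: D * A^(2(m+1)) = A^(m+1) * A^m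
  have hpow : A ^ (2 * (m+1)) = A ^ (m+1+1) * A ^ m := by
    rw [← pow_add]; ring_nf
  have hW : D * A ^ (2 * (m+1)) = A ^ (m+1) * A ^ m := by
    rw [hpow, ← mul_assoc, hD1]
  have hAP : A * (A ^ (m+1) * A ^ m) = A ^ (m+1) * A ^ (m+1) := by
    rw [← mul_assoc, ← pow_succ', ← pow_add, ← pow_add]; ring_nf
  refine ⟨?_, ?_, ?_⟩
  · -- W · A^(k+1) = A^k
    have h2k : A ^ (2 * (m+1)) = A ^ (m+1) * A ^ (m+1) := by
      rw [← pow_add]; ring_nf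
    rw [h2k, pow_succ (A) (m+1)]
    calc D * (A ^ (m+1) * A ^ (m+1)) * Xᴴ * E * (A ^ (m+1) * A)
        = D * (A ^ (m+1) * (A ^ (m+1) * (Xᴴ * (E * (A ^ (m+1) * A))))) := by
          simp only [mul_assoc]
      _ = D * (A ^ (m+1) * A) := by rw [hdag_t]
      _ = A ^ (m+1) := by rw [← pow_succ]; exact hD1
  · -- A · W² = W
    rw [sq, hW]
    calc A * (A ^ (m+1) * A ^ m * Xᴴ * E * (A ^ (m+1) * A ^ m * Xᴴ * E))
        = A * (A ^ (m+1) * A ^ m) * (Xᴴ * (E * (A ^ (m+1) * (A ^ m * (Xᴴ * E))))) := by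
          simp only [mul_assoc]
      _ = A ^ (m+1) * (A ^ (m+1) * (Xᴴ * (E * (A ^ (m+1) * (A ^ m * (Xᴴ * E)))))) := by
          rw [hAP]; simp only [mul_assoc]
      _ = A ^ (m+1) * (A ^ m * (Xᴴ * E)) := by rw [hdag_t]
      _ = A ^ (m+1) * A ^ m * Xᴴ * E := by simp only [mul_assoc]
  · -- E·A·W is Hermitian
    rw [hW]
    have hEAW : E * A * (A ^ (m+1) * A ^ m * Xᴴ * E)
        = E * (A ^ (m+1) * (A ^ (m+1) * (Xᴴ * E))) := by
      calc E * A * (A ^ (m+1) * A ^ m * Xᴴ * E)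
          = E * (A * (A ^ (m+1) * A ^ m) * (Xᴴ * E)) := by simp only [mul_assoc]
        _ = E * (A ^ (m+1) * (A ^ (m+1) * (Xᴴ * E))) := by rw [hAP]; simp only [mul_assoc]
    rw [hEAW]
    have hherm : (E * (A ^ (m+1) * (A ^ (m+1) * (Xᴴ * E))))ᴴ
        = E * (X * ((A ^ (m+1))ᴴ * ((A ^ (m+1))ᴴ * E))) := by
      simp only [conjTranspose_mul, conjTranspose_conjTranspose, hEherm, mul_assoc]
    rw [hherm]
    nth_rewrite 2 [← hstar1]
    simp only [mul_assoc]
    rw [hX_t]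
end

section
/- Let A, E be n×n complex matrices with E invertible and Hermitian, and let k be a positive integer with rank(A^k) = rank(A^(k+1)). (a) If X is an E-weighted core-EP inverse of A with exponent k (X·A^(k+1) = A^k, A·X^2 = X, (E·A·X)^* = E·A·X), then X^k is an E-weighted core inverse of A^k, i.e., X^k·(A^k)^2 = A^k, A^k·(X^k)^2 = X^k, and (E·A^k·X^k)^* = E·A^k·X^k. (b) Conversely, if Y is an E-weighted core inverse of A^k (Y·(A^k)^2 = A^k, A^k·Y^2 = Y, (E·A^k·Y)^* = E·A^k·Y), then A^(k-1)·Y is an E-weighted core-EP inverse of A with exponent k. -/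
open Matrix

/-!
From `x * a ^ (k + 1) = a ^ k` and `a * x ^ 2 = x` one gets `x ^ j * a ^ (k + j) = a ^ k` and
`a ^ j * x ^ (j + 1) = x`; these give the core identities for `x ^ k` and `a ^ k * x ^ k = a * x`,
so the self-adjointness condition carries over unchanged. Conversely, the rank condition says that
`A ^ (k + 1)` and `A ^ k` have the same column space, i.e. `A ^ k = A ^ (k + 1) * S` for some `S`,
and this factorization is what lets `A ^ (k - 1) * Y` absorb the extra power of `A`.
-/

/-- With `k = 1` this is the `e`-weighted core inverse. -/
structure IsWeightedCoreEPInverse {M : Type*} [Monoid M] [Star M] (e a x : M) (k : ℕ) : Prop where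
  mul_pow_succ : x * a ^ (k + 1) = a ^ k
  mul_sq : a * x ^ 2 = x
  isSelfAdjoint : IsSelfAdjoint (e * a * x)

section Monoid

variable {M : Type*} [Monoid M] {a b s x : M}

theorem pow_mul_pow_add_eq_of_mul_pow_succ_eq {k : ℕ} (h : x * a ^ (k + 1) = a ^ k) (j : ℕ) :
    x ^ j * a ^ (k + j) = a ^ k := by
  induction j with
  | zero => simp
  | succ j ih =>
    calc x ^ (j + 1) * a ^ (k + (j + 1)) = x ^ j * (x * a ^ (k + 1)) * a ^ j := by
          rw [pow_succ, show k + (j + 1) = k + 1 + j by omega, pow_add]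
          simp only [mul_assoc]
      _ = x ^ j * a ^ (k + j) := by rw [h, mul_assoc, ← pow_add]
      _ = a ^ k := ih

theorem pow_mul_pow_succ_eq_of_mul_sq_eq (h : a * x ^ 2 = x) (j : ℕ) :
    a ^ j * x ^ (j + 1) = x := by
  induction j with
  | zero => simp
  | succ j ih =>
    calc a ^ (j + 1) * x ^ (j + 1 + 1) = a ^ j * (a * x ^ 2) * x ^ j := by
          rw [pow_succ, show j + 1 + 1 = 2 + j by omega, pow_add]
          simp only [mul_assoc]
      _ = a ^ j * x ^ (j + 1) := by rw [h, mul_assoc, ← pow_succ']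
      _ = x := ih

theorem pow_mul_mul_pow_eq_of_mul_mul_eq (h : a * b * s = b) (j : ℕ) :
    a ^ j * b * s ^ j = b := by
  induction j with
  | zero => simp
  | succ j ih =>
    calc a ^ (j + 1) * b * s ^ (j + 1) = a ^ j * (a * b * s) * s ^ j := by
          rw [pow_succ a j, pow_succ' s j]
          simp only [mul_assoc]
      _ = b := by rw [h, ih]

end Monoid

namespace IsWeightedCoreEPInverse

variable {M : Type*} [Monoid M] [Star M] {e a x y : M} {k : ℕ}

theorem pow (hx : IsWeightedCoreEPInverse e a x k) (hk : k ≠ 0) :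
    IsWeightedCoreEPInverse e (a ^ k) (x ^ k) 1 := by
  obtain ⟨m, rfl⟩ : ∃ m, k = m + 1 := ⟨k - 1, by omega⟩
  have hax : a ^ (m + 1) * x ^ (m + 1) = a * x := by
    rw [pow_succ', mul_assoc, pow_mul_pow_succ_eq_of_mul_sq_eq hx.mul_sq]
  refine ⟨?_, ?_, ?_⟩
  · rw [pow_one, one_add_one_eq_two, ← pow_mul, mul_two]
    exact pow_mul_pow_add_eq_of_mul_pow_succ_eq hx.mul_pow_succ _
  · rw [← pow_mul, show (m + 1) * 2 = m + 1 + 1 + m by omega, pow_add x, ← mul_assoc,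
      pow_mul_pow_succ_eq_of_mul_sq_eq hx.mul_sq, ← pow_succ']
  · rw [mul_assoc, hax, ← mul_assoc]
    exact hx.isSelfAdjoint

theorem pow_pred_mul (hy : IsWeightedCoreEPInverse e (a ^ k) y 1)
    (hs : ∃ s, a ^ (k + 1) * s = a ^ k) (hk : k ≠ 0) :
    IsWeightedCoreEPInverse e a (a ^ (k - 1) * y) k := by
  obtain ⟨m, rfl⟩ : ∃ m, k = m + 1 := ⟨k - 1, by omega⟩
  obtain ⟨s, hs⟩ := hs
  obtain ⟨hy₁, hy₂, hy₃⟩ := hy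
  simp only [Nat.add_sub_cancel, pow_one, one_add_one_eq_two] at hy₁ ⊢
  set b := a ^ (m + 1)
  have hap : a * a ^ m = b := (pow_succ' a m).symm
  have hpa : a ^ m * a = b := (pow_succ a m).symm
  have habs : a * b * s = b := by rw [← pow_succ', hs]
  have hpb : a ^ m * b = b * b * s := by
    conv_lhs => rw [← habs]
    simp only [← mul_assoc, hpa]
  have hab : a * b = b * b * s ^ m := by
    conv_lhs => rw [← pow_mul_mul_pow_eq_of_mul_mul_eq habs m]
    simp only [← mul_assoc, hap]
  have hpy : a ^ m * y = b * b * s * y ^ 2 := by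
    conv_lhs => rw [← hy₂]
    rw [← mul_assoc, hpb]
  refine ⟨?_, ?_, ?_⟩
  · calc a ^ m * y * a ^ (m + 1 + 1) = a ^ m * (y * b ^ 2) * s ^ m := by
          rw [pow_succ', hab, sq]; simp only [mul_assoc]
      _ = b := by rw [hy₁, pow_mul_mul_pow_eq_of_mul_mul_eq habs m]
  · calc a * (a ^ m * y) ^ 2 = b * (y * b ^ 2) * s * y ^ 2 := by
          rw [sq, mul_assoc, ← mul_assoc a, hap, hpy, sq b]; simp only [mul_assoc]
      _ = a ^ m * y := by rw [hy₁, hpy]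
  · rwa [mul_assoc e, ← mul_assoc a, hap, ← mul_assoc]

end IsWeightedCoreEPInverse

theorem Matrix.exists_mul_eq_of_range_mulVecLin_le {m n o R : Type*} [CommSemiring R]
    [Fintype n] [Fintype o] [DecidableEq o] {A : Matrix m n R} {B : Matrix m o R}
    (h : LinearMap.range B.mulVecLin ≤ LinearMap.range A.mulVecLin) :
    ∃ S : Matrix n o R, A * S = B := by
  have hcol (j : o) : ∃ v, A *ᵥ v = B.col j := by
    simpa [mulVec_single_one] using h ⟨Pi.single j 1, rfl⟩
  choose v hv using hcol
  refine ⟨(of v)ᵀ, ext fun i j => ?_⟩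
  simpa [mul_apply, mulVec, dotProduct] using congrFun (hv j) i

theorem Matrix.exists_pow_succ_mul_eq_pow_of_rank_eq {n K : Type*} [Field K] [Fintype n]
    [DecidableEq n] {A : Matrix n n K} {k : ℕ} (h : (A ^ k).rank = (A ^ (k + 1)).rank) :
    ∃ S, A ^ (k + 1) * S = A ^ k := by
  have hle : LinearMap.range (A ^ (k + 1)).mulVecLin ≤ LinearMap.range (A ^ k).mulVecLin := by
    rw [pow_succ, mulVecLin_mul]
    exact LinearMap.range_comp_le_range _ _
  exact exists_mul_eq_of_range_mulVecLin_le (Submodule.eq_of_le_of_finrank_le hle h.le).ge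

theorem stmt_10_general {n : ℕ} (A E : Matrix (Fin n) (Fin n) ℂ) (k : ℕ) (hk : 0 < k)
    (hrank : (A ^ k).rank = (A ^ (k + 1)).rank) :
    (∀ X : Matrix (Fin n) (Fin n) ℂ,
      X * A ^ (k + 1) = A ^ k → A * X ^ 2 = X → (E * A * X)ᴴ = E * A * X →
      X ^ k * (A ^ k) ^ 2 = A ^ k ∧ A ^ k * (X ^ k) ^ 2 = X ^ k ∧
      (E * A ^ k * X ^ k)ᴴ = E * A ^ k * X ^ k) ∧
    (∀ Y : Matrix (Fin n) (Fin n) ℂ,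
      Y * (A ^ k) ^ 2 = A ^ k → A ^ k * Y ^ 2 = Y → (E * A ^ k * Y)ᴴ = E * A ^ k * Y →
      A ^ (k - 1) * Y * A ^ (k + 1) = A ^ k ∧
      A * (A ^ (k - 1) * Y) ^ 2 = A ^ (k - 1) * Y ∧
      (E * A * (A ^ (k - 1) * Y))ᴴ = E * A * (A ^ (k - 1) * Y)) := by
  refine ⟨fun X h₁ h₂ h₃ => ?_, fun Y h₁ h₂ h₃ => ?_⟩
  · obtain ⟨h₁', h₂', h₃'⟩ := IsWeightedCoreEPInverse.pow ⟨h₁, h₂, h₃⟩ hk.ne'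
    rw [pow_one, one_add_one_eq_two] at h₁'
    exact ⟨h₁', h₂', h₃'⟩
  · have hY : IsWeightedCoreEPInverse E (A ^ k) Y 1 := ⟨by rwa [pow_one, one_add_one_eq_two], h₂, h₃⟩
    obtain ⟨h₁', h₂', h₃'⟩ :=
      hY.pow_pred_mul (A.exists_pow_succ_mul_eq_pow_of_rank_eq hrank) hk.ne'
    exact ⟨h₁', h₂', h₃'⟩

/-- (a) If X is an E-weighted core-EP inverse of A with exponent k, then X^k is
an E-weighted core inverse of A^k. (b) Conversely, if Y is an E-weighted core
inverse of A^k, then A^(k-1)·Y is an E-weighted core-EP inverse of A with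
exponent k. -/
theorem stmt_10 {n : ℕ} (A E : Matrix (Fin n) (Fin n) ℂ) (k : ℕ) (hk : 0 < k)
    (hE : IsUnit E) (hEherm : Eᴴ = E)
    (hrank : (A ^ k).rank = (A ^ (k + 1)).rank) :
    (∀ X : Matrix (Fin n) (Fin n) ℂ,
      X * A ^ (k + 1) = A ^ k → A * X ^ 2 = X → (E * A * X)ᴴ = E * A * X →
      X ^ k * (A ^ k) ^ 2 = A ^ k ∧ A ^ k * (X ^ k) ^ 2 = X ^ k ∧
      (E * A ^ k * X ^ k)ᴴ = E * A ^ k * X ^ k) ∧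
    (∀ Y : Matrix (Fin n) (Fin n) ℂ,
      Y * (A ^ k) ^ 2 = A ^ k → A ^ k * Y ^ 2 = Y → (E * A ^ k * Y)ᴴ = E * A ^ k * Y →
      A ^ (k - 1) * Y * A ^ (k + 1) = A ^ k ∧
      A * (A ^ (k - 1) * Y) ^ 2 = A ^ (k - 1) * Y ∧
      (E * A * (A ^ (k - 1) * Y))ᴴ = E * A * (A ^ (k - 1) * Y)) :=
  stmt_10_general A E k hk hrank
end

section
/- Let A, E be n×n complex matrices with E invertible and Hermitian, and let l be a positive integer. (a) If X is an E-weighted core-EP inverse of A with exponent k (X·A^(k+1) = A^k, A·X^2 = X, (E·A·X)^* = E·A·X) and m is a positive integer with l·m ≥ k, then X^l is an E-weighted core-EP inverse of A^l with exponent m, i.e., X^l·(A^l)^(m+1) = (A^l)^m, A^l·(X^l)^2 = X^l, and (E·A^l·X^l)^* = E·A^l·X^l. (b) Conversely, if Y is an E-weighted core-EP inverse of A^l with exponent m, then A^(l-1)·Y is an E-weighted core-EP inverse of A with exponent l·m. -/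
open Matrix

/-- If `B * Y^2 = Y` then `B^j * Y^(j+1) = Y` for all `j`. -/
private lemma aux_powfix {n : ℕ} (B Y : Matrix (Fin n) (Fin n) ℂ)
    (h : B * Y ^ 2 = Y) (j : ℕ) : B ^ j * Y ^ (j + 1) = Y := by
  induction j with
  | zero => simp
  | succ j ih =>
    calc B ^ (j + 1) * Y ^ (j + 1 + 1)
        = B * B ^ j * (Y ^ (j + 1) * Y) := by rw [pow_succ', pow_succ]
      _ = B * (B ^ j * Y ^ (j + 1)) * Y := by
          rw [mul_assoc, mul_assoc, mul_assoc]
      _ = B * (Y * Y) := by rw [ih, mul_assoc]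
      _ = Y := by rw [← sq, h]

/-- If `X * A^(k+1) = A^k` then `X * A^(t+1) = A^t` for all `t ≥ k`. -/
private lemma aux_shift {n : ℕ} (X A : Matrix (Fin n) (Fin n) ℂ) (k : ℕ)
    (h : X * A ^ (k + 1) = A ^ k) (t : ℕ) (ht : k ≤ t) :
    X * A ^ (t + 1) = A ^ t := by
  obtain ⟨r, rfl⟩ := Nat.exists_eq_add_of_le ht
  rw [show k + r + 1 = (k + 1) + r from by omega, pow_add, ← mul_assoc, h,
    ← pow_add]

/-- If `A * X^2 = X` then `A^j * X^j = A * X` for all `j ≥ 1`. -/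
private lemma aux_AX {n : ℕ} (A X : Matrix (Fin n) (Fin n) ℂ)
    (h : A * X ^ 2 = X) : ∀ j, 1 ≤ j → A ^ j * X ^ j = A * X := by
  intro j hj
  induction j, hj using Nat.le_induction with
  | base => simp
  | succ j hj ih =>
    calc A ^ (j + 1) * X ^ (j + 1)
        = A * A ^ j * (X ^ j * X) := by rw [pow_succ', pow_succ]
      _ = A * (A ^ j * X ^ j) * X := by rw [mul_assoc, mul_assoc, mul_assoc]
      _ = A * (A * (X * X)) := by rw [ih, mul_assoc, mul_assoc]
      _ = A * X := by rw [← sq, h]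

/-- (a) If X is an E-weighted core-EP inverse of A with exponent k and l·m ≥ k,
then X^l is an E-weighted core-EP inverse of A^l with exponent m.
(b) Conversely, if Y is an E-weighted core-EP inverse of A^l with exponent m,
then A^(l-1)·Y is an E-weighted core-EP inverse of A with exponent l·m. -/
theorem stmt_11 {n : ℕ} (A E : Matrix (Fin n) (Fin n) ℂ) (l : ℕ) (hl : 0 < l)
    (hE : IsUnit E) (hEherm : Eᴴ = E) :
    (∀ (k m : ℕ) (X : Matrix (Fin n) (Fin n) ℂ), 0 < k → 0 < m → k ≤ l * m →
      X * A ^ (k + 1) = A ^ k → A * X ^ 2 = X → (E * A * X)ᴴ = E * A * X →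
      X ^ l * (A ^ l) ^ (m + 1) = (A ^ l) ^ m ∧
      A ^ l * (X ^ l) ^ 2 = X ^ l ∧
      (E * A ^ l * X ^ l)ᴴ = E * A ^ l * X ^ l) ∧
    (∀ (m : ℕ) (Y : Matrix (Fin n) (Fin n) ℂ), 0 < m →
      Y * (A ^ l) ^ (m + 1) = (A ^ l) ^ m → A ^ l * Y ^ 2 = Y →
      (E * A ^ l * Y)ᴴ = E * A ^ l * Y →
      A ^ (l - 1) * Y * A ^ (l * m + 1) = A ^ (l * m) ∧
      A * (A ^ (l - 1) * Y) ^ 2 = A ^ (l - 1) * Y ∧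
      (E * A * (A ^ (l - 1) * Y))ᴴ = E * A * (A ^ (l - 1) * Y)) := by
  constructor
  · -- part (a)
    intro k m X hk hm hkm hX1 hX2 hX3
    have hAXl : A ^ l * X ^ l = A * X := aux_AX A X hX2 l hl
    -- key induction for the first identity
    have key : ∀ i, i ≤ l → X ^ i * A ^ (l * m + l) = A ^ (l * m + l - i) := by
      intro i
      induction i with
      | zero => intro _; simp
      | succ i ih =>
        intro hil
        have h1 := ih (by omega)
        calc X ^ (i + 1) * A ^ (l * m + l)
            = X * (X ^ i * A ^ (l * m + l)) := by rw [pow_succ', mul_assoc]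
          _ = X * A ^ (l * m + l - i) := by rw [h1]
          _ = X * A ^ ((l * m + l - (i + 1)) + 1) := by
              rw [show l * m + l - i = (l * m + l - (i + 1)) + 1 from by omega]
          _ = A ^ (l * m + l - (i + 1)) :=
              aux_shift X A k hX1 _ (by omega)
    refine ⟨?_, ?_, ?_⟩
    · -- X^l * (A^l)^(m+1) = (A^l)^m
      rw [← pow_mul, ← pow_mul, show l * (m + 1) = l * m + l from by ring]
      have := key l le_rfl
      rwa [show l * m + l - l = l * m from by omega] at this
    · -- A^l * (X^l)^2 = X^l
      have hXl : A * X ^ (l + 1) = X ^ l := by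
        obtain ⟨j, rfl⟩ : ∃ j, l = j + 1 := ⟨l - 1, by omega⟩
        calc A * X ^ (j + 1 + 1)
            = A * X ^ 2 * X ^ j := by
              rw [mul_assoc, ← pow_add, show 2 + j = j + 1 + 1 from by omega]
          _ = X * X ^ j := by rw [hX2]
          _ = X ^ (j + 1) := (pow_succ' X j).symm
      calc A ^ l * (X ^ l) ^ 2
          = A ^ l * X ^ l * X ^ l := by rw [sq, ← mul_assoc]
        _ = A * X * X ^ l := by rw [hAXl]
        _ = A * X ^ (l + 1) := by rw [mul_assoc, ← pow_succ']
        _ = X ^ l := hXl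
    · -- hermitian
      rw [mul_assoc, hAXl, ← mul_assoc]
      exact hX3
  · -- part (b)
    intro m Y hm hY1 hY2 hY3
    rw [← pow_mul, ← pow_mul] at hY1
    have f1 : Y * A ^ (l * m + l) = A ^ (l * m) := by
      rwa [show l * (m + 1) = l * m + l from by ring] at hY1
    have f2 : ∀ j, A ^ (l * j) * Y ^ (j + 1) = Y := by
      intro j
      have := aux_powfix (A ^ l) Y hY2 j
      rwa [← pow_mul] at this
    have hAl : A * A ^ (l - 1) = A ^ l := by
      rw [← pow_succ']
      congr 1
      omega
    have pa : ∀ (a b : ℕ) (N : Matrix (Fin n) (Fin n) ℂ),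
        A ^ a * (A ^ b * N) = A ^ (a + b) * N := by
      intro a b N
      rw [← mul_assoc, ← pow_add]
    have pa' : ∀ (a b : ℕ), A ^ a * A ^ b = A ^ (a + b) :=
      fun a b => (pow_add A a b).symm
    set C : Matrix (Fin n) (Fin n) ℂ := Y ^ (m + 2) * A ^ (l * m + l + 1) with hC
    have stepC : A ^ (l * m + l) * C = A ^ (l * m + 1) := by
      calc A ^ (l * m + l) * (Y ^ (m + 2) * A ^ (l * m + l + 1))
          = A ^ (l * (m + 1)) * Y ^ (m + 1 + 1) * A ^ (l * m + l + 1) := by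
            rw [← mul_assoc, show l * (m + 1) = l * m + l from by ring]
        _ = Y * (A ^ (l * m + l) * A) := by rw [f2 (m + 1), pow_succ]
        _ = A ^ (l * m) * A := by rw [← mul_assoc, f1]
        _ = A ^ (l * m + 1) := (pow_succ A _).symm
    have step2 : A ^ (l - 1) * Y * A ^ (l * m + 1) = A ^ (l * m + l - 1) * C := by
      rw [← stepC, ← mul_assoc, mul_assoc (A ^ (l - 1)), f1, ← pow_add,
        show l - 1 + l * m = l * m + l - 1 from by omega]
    have step3 : A ^ (l * m) = A ^ (l * m + l - 1) * C := by
      calc A ^ (l * m)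
          = Y * A ^ (l * m + l) := f1.symm
        _ = Y * (A ^ (l - 1) * A ^ (l * m + 1)) := by
            rw [pa' (l - 1) (l * m + 1),
              show l - 1 + (l * m + 1) = l * m + l from by omega]
        _ = Y * (A ^ (l - 1) * (A ^ (l * m + l) * C)) := by rw [stepC]
        _ = A ^ (l * m) * (A ^ (l - 1) * C) := by
            rw [pa, show l - 1 + (l * m + l) = l * m + l + (l - 1) from by omega,
              pow_add, mul_assoc, ← mul_assoc Y, f1]
        _ = A ^ (l * m + l - 1) * C := by
            rw [pa, show l * m + (l - 1) = l * m + l - 1 from by omega]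
    refine ⟨step2.trans step3.symm, ?_, ?_⟩
    · -- A * (A^(l-1) * Y)^2 = A^(l-1) * Y
      have hml : l * (m + 1) = l * m + l := by ring
      calc A * (A ^ (l - 1) * Y) ^ 2
          = A * (A ^ (l - 1) * (Y * (A ^ (l - 1) * Y))) := by
            rw [sq]; simp only [mul_assoc]
        _ = A ^ l * (Y * (A ^ (l - 1) * Y)) := by rw [← mul_assoc, hAl]
        _ = A ^ l * (Y * (A ^ (l - 1) * (A ^ (l * (m + 1)) * Y ^ (m + 1 + 1)))) := by
            rw [f2 (m + 1)]
        _ = A ^ l * (Y * (A ^ (l * (m + 1)) * (A ^ (l - 1) * Y ^ (m + 1 + 1)))) := by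
            rw [pa, show l - 1 + l * (m + 1) = l * (m + 1) + (l - 1) from by omega,
              pow_add, mul_assoc]
        _ = A ^ l * ((Y * A ^ (l * (m + 1))) * (A ^ (l - 1) * Y ^ (m + 1 + 1))) := by
            rw [← mul_assoc Y]
        _ = A ^ l * (A ^ (l * m) * (A ^ (l - 1) * Y ^ (m + 1 + 1))) := by rw [hY1]
        _ = A ^ (l - 1) * (A ^ (l * (m + 1)) * Y ^ (m + 1 + 1)) := by
            rw [pa, pa, show l + l * m + (l - 1) = l - 1 + l * (m + 1) from by omega,
              pow_add, mul_assoc]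
        _ = A ^ (l - 1) * Y := by rw [f2 (m + 1)]
    · -- hermitian
      rw [← mul_assoc, mul_assoc E, hAl]
      exact hY3
end

section
/- Let A, E be n×n complex matrices with E invertible and Hermitian, let k be a positive integer, and let X be an E-weighted core-EP inverse of A with exponent k (X·A^(k+1) = A^k, A·X^2 = X, (E·A·X)^* = E·A·X). Then A^2·X is an E-weighted core-EP inverse of X with exponent k, i.e., (A^2·X)·X^(k+1) = X^k, X·(A^2·X)^2 = A^2·X, and (E·X·(A^2·X))^* = E·X·(A^2·X). -/
open Matrix

/-- If X is an E-weighted core-EP inverse of A with exponent k, then A²·X is an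
E-weighted core-EP inverse of X with exponent k. -/
theorem stmt_12 {n : ℕ} (A E X : Matrix (Fin n) (Fin n) ℂ) (k : ℕ) (hk : 0 < k)
    (hE : IsUnit E) (hEherm : Eᴴ = E)
    (h6 : X * A ^ (k + 1) = A ^ k) (h7 : A * X ^ 2 = X)
    (h3 : (E * A * X)ᴴ = E * A * X) :
    A ^ 2 * X * X ^ (k + 1) = X ^ k ∧
    X * (A ^ 2 * X) ^ 2 = A ^ 2 * X ∧
    (E * X * (A ^ 2 * X))ᴴ = E * X * (A ^ 2 * X) := by
  -- X = A^m * X^(m+1) for all m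
  have hX : ∀ m : ℕ, X = A ^ m * X ^ (m + 1) := by
    intro m
    induction m with
    | zero => simp
    | succ m ih =>
      have hstep : X ^ (m + 1) = A * X ^ (m + 2) := by
        calc X ^ (m + 1) = X * X ^ m := by rw [pow_succ']
          _ = (A * X ^ 2) * X ^ m := by rw [h7]
          _ = A * X ^ (m + 2) := by rw [mul_assoc, ← pow_add, Nat.add_comm 2 m]
      calc X = A ^ m * X ^ (m + 1) := ih
        _ = A ^ m * (A * X ^ (m + 2)) := by rw [← hstep]
        _ = A ^ (m + 1) * X ^ (m + 2) := by rw [← mul_assoc, ← pow_succ]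
  have assoc : ∀ (p q : ℕ), X * A ^ p * (A ^ q * X ^ (k + 1))
      = X * A ^ (p + q) * X ^ (k + 1) := by
    intro p q
    rw [mul_assoc, ← mul_assoc (A ^ p), ← pow_add, ← mul_assoc]
  -- key: X * A^2 * X = A * X
  have key : X * A ^ 2 * X = A * X := by
    calc X * A ^ 2 * X
        = X * A ^ 2 * (A ^ k * X ^ (k + 1)) := by rw [← hX k]
      _ = X * A ^ (2 + k) * X ^ (k + 1) := assoc 2 k
      _ = X * A ^ ((k + 1) + 1) * X ^ (k + 1) := by rw [show 2 + k = (k + 1) + 1 from by omega]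
      _ = X * A ^ (k + 1) * (A ^ 1 * X ^ (k + 1)) := by rw [assoc (k + 1) 1]
      _ = A ^ k * (A * X ^ (k + 1)) := by rw [h6, pow_one]
      _ = A * (A ^ k * X ^ (k + 1)) := by rw [← mul_assoc, ← pow_succ, pow_succ', mul_assoc]
      _ = A * X := by rw [← hX k]
  refine ⟨?_, ?_, ?_⟩
  · -- A^2 * X * X^(k+1) = X^k
    obtain ⟨j, hj⟩ : ∃ j, k = j + 1 := ⟨k - 1, by omega⟩
    subst hj
    calc A ^ 2 * X * X ^ (j + 2) = A ^ 2 * (X * X ^ (j + 2)) := by rw [mul_assoc]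
      _ = A ^ 2 * X ^ (j + 3) := by rw [← pow_succ']
      _ = A ^ 2 * (X ^ 3 * X ^ j) := by rw [show j + 3 = 3 + j from by omega, pow_add]
      _ = (A ^ 2 * X ^ 3) * X ^ j := by rw [mul_assoc]
      _ = X * X ^ j := by rw [← hX 2]
      _ = X ^ (j + 1) := by rw [pow_succ']
  · calc X * (A ^ 2 * X) ^ 2 = X * A ^ 2 * X * A ^ 2 * X := by noncomm_ring
      _ = A * X * A ^ 2 * X := by rw [key]
      _ = A * (X * A ^ 2 * X) := by rw [mul_assoc, mul_assoc, ← mul_assoc X]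
      _ = A * (A * X) := by rw [key]
      _ = A ^ 2 * X := by noncomm_ring
  · have h : E * X * (A ^ 2 * X) = E * A * X := by
      rw [mul_assoc E X, ← mul_assoc X, key, ← mul_assoc]
    rw [h, h3]
end

section
/- Let A, E, F be n×n complex matrices with E and F invertible and Hermitian. If there exist n×n complex matrices X and Y such that A·X·A = A = A·Y·A, (E·A·X)^* = E·A·X, and (F·Y·A)^* = F·Y·A, then Z = Y·A·X is the generalized weighted Moore–Penrose inverse of A with weights E, F; that is, A·Z·A = A, Z·A·Z = Z, (E·A·Z)^* = E·A·Z, and (F·Z·A)^* = F·Z·A. -/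
open Matrix

/-- If X is a {1,3^E}-inverse and Y a {1,4^F}-inverse of A, then Z = Y·A·X is
the generalized weighted Moore–Penrose inverse of A with weights E, F. -/
theorem stmt_14 {n : ℕ} (A E F X Y : Matrix (Fin n) (Fin n) ℂ)
    (hE : IsUnit E) (hEherm : Eᴴ = E) (hF : IsUnit F) (hFherm : Fᴴ = F)
    (hX1 : A * X * A = A) (hY1 : A * Y * A = A)
    (hX3 : (E * A * X)ᴴ = E * A * X) (hY4 : (F * Y * A)ᴴ = F * Y * A) :
    A * (Y * A * X) * A = A ∧
    (Y * A * X) * A * (Y * A * X) = Y * A * X ∧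
    (E * A * (Y * A * X))ᴴ = E * A * (Y * A * X) ∧
    (F * (Y * A * X) * A)ᴴ = F * (Y * A * X) * A := by
  have hAZ : A * (Y * A * X) = A * X := by
    calc A * (Y * A * X) = (A * Y * A) * X := by simp [mul_assoc]
    _ = A * X := by rw [hY1]
  have hZA : (Y * A * X) * A = Y * A := by
    calc (Y * A * X) * A = Y * (A * X * A) := by simp [mul_assoc]
    _ = Y * A := by rw [hX1]
  refine ⟨?_, ?_, ?_, ?_⟩
  · rw [hAZ, hX1]
  · calc (Y * A * X) * A * (Y * A * X) = (Y * A) * (Y * A * X) := by rw [hZA]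
      _ = Y * (A * Y * A) * X := by simp [mul_assoc]
      _ = Y * A * X := by rw [hY1]
  · rw [show E * A * (Y * A * X) = E * (A * (Y * A * X)) from by simp [mul_assoc],
      hAZ, ← mul_assoc]
    exact hX3
  · rw [show F * (Y * A * X) * A = F * ((Y * A * X) * A) from by simp [mul_assoc],
      hZA, ← mul_assoc]
    exact hY4
end

section
/- Let A, E, F be n×n complex matrices with E and F invertible and Hermitian. Then A has a generalized weighted Moore–Penrose inverse with weights E, F (i.e., there exists X with A·X·A = A, X·A·X = X, (E·A·X)^* = E·A·X, (F·X·A)^* = F·X·A) if and only if there exist n×n complex matrices Y and Z such that A·F⁻¹·A^*·E·A·Y = A and Z·A·F⁻¹·A^*·E·A = A. -/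
open Matrix

set_option maxHeartbeats 1600000 in
/-- A has a generalized weighted Moore–Penrose inverse with weights E, F iff
A·F⁻¹·Aᴴ·E·A·Y = A and Z·A·F⁻¹·Aᴴ·E·A = A for some Y, Z. -/
theorem stmt_15 {n : ℕ} (A E F : Matrix (Fin n) (Fin n) ℂ)
    (hE : IsUnit E) (hEherm : Eᴴ = E) (hF : IsUnit F) (hFherm : Fᴴ = F) :
    (∃ X : Matrix (Fin n) (Fin n) ℂ,
      A * X * A = A ∧ X * A * X = X ∧
      (E * A * X)ᴴ = E * A * X ∧ (F * X * A)ᴴ = F * X * A) ↔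
    (∃ Y Z : Matrix (Fin n) (Fin n) ℂ,
      A * F⁻¹ * Aᴴ * E * A * Y = A ∧ Z * A * F⁻¹ * Aᴴ * E * A = A) := by
  have hEd : IsUnit E.det := (Matrix.isUnit_iff_isUnit_det E).mp hE
  have hFd : IsUnit F.det := (Matrix.isUnit_iff_isUnit_det F).mp hF
  have hFi : (F⁻¹)ᴴ = F⁻¹ := by
    rw [Matrix.conjTranspose_nonsing_inv, hFherm]
  constructor
  · rintro ⟨X, hx1, hx2, hx3, hx4⟩
    have h3' : Xᴴ * Aᴴ * E = E * A * X := by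
      rw [← hx3]; simp only [conjTranspose_mul, hEherm, mul_assoc]
    have h4' : Aᴴ * Xᴴ * F = F * X * A := by
      rw [← hx4]; simp only [conjTranspose_mul, hFherm, mul_assoc]
    have ha : Aᴴ * E * A * X = Aᴴ * E := by
      calc Aᴴ * E * A * X = Aᴴ * (E * A * X) := by simp only [mul_assoc]
        _ = Aᴴ * (Xᴴ * Aᴴ * E) := by rw [h3']
        _ = (A * X * A)ᴴ * E := by simp only [conjTranspose_mul, mul_assoc]
        _ = Aᴴ * E := by rw [hx1]
    have hXA : X * A = F⁻¹ * (Aᴴ * Xᴴ * F) := by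
      rw [h4', ← mul_assoc, ← mul_assoc, Matrix.nonsing_inv_mul F hFd, one_mul]
    have hb : X * A * F⁻¹ * Aᴴ = F⁻¹ * Aᴴ := by
      calc X * A * F⁻¹ * Aᴴ = F⁻¹ * (Aᴴ * Xᴴ * F) * F⁻¹ * Aᴴ := by rw [hXA]
        _ = F⁻¹ * Aᴴ * Xᴴ * (F * F⁻¹) * Aᴴ := by simp only [mul_assoc]
        _ = F⁻¹ * Aᴴ * Xᴴ * Aᴴ := by
            rw [Matrix.mul_nonsing_inv F hFd, mul_one]
        _ = F⁻¹ * (A * X * A)ᴴ := by simp only [conjTranspose_mul, mul_assoc]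
        _ = F⁻¹ * Aᴴ := by rw [hx1]
    refine ⟨X * E⁻¹ * Xᴴ * F, E⁻¹ * Xᴴ * F * X, ?_, ?_⟩
    · calc A * F⁻¹ * Aᴴ * E * A * (X * E⁻¹ * Xᴴ * F)
          = A * F⁻¹ * (Aᴴ * E * A * X) * E⁻¹ * Xᴴ * F := by simp only [mul_assoc]
        _ = A * F⁻¹ * (Aᴴ * E) * E⁻¹ * Xᴴ * F := by rw [ha]
        _ = A * F⁻¹ * Aᴴ * (E * E⁻¹) * Xᴴ * F := by simp only [mul_assoc]
        _ = A * F⁻¹ * Aᴴ * Xᴴ * F := by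
            rw [Matrix.mul_nonsing_inv E hEd, mul_one]
        _ = (X * A * F⁻¹ * Aᴴ)ᴴ * F := by
            simp only [conjTranspose_mul, conjTranspose_conjTranspose, hFi, mul_assoc]
        _ = (F⁻¹ * Aᴴ)ᴴ * F := by rw [hb]
        _ = A * (F⁻¹ * F) := by
            simp only [conjTranspose_mul, conjTranspose_conjTranspose, hFi, mul_assoc]
        _ = A := by rw [Matrix.nonsing_inv_mul F hFd, mul_one]
    · calc E⁻¹ * Xᴴ * F * X * A * F⁻¹ * Aᴴ * E * A
          = E⁻¹ * Xᴴ * F * (X * A * F⁻¹ * Aᴴ) * E * A := by simp only [mul_assoc]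
        _ = E⁻¹ * Xᴴ * F * (F⁻¹ * Aᴴ) * E * A := by rw [hb]
        _ = E⁻¹ * Xᴴ * (F * F⁻¹) * (Aᴴ * E * A) := by simp only [mul_assoc]
        _ = E⁻¹ * (Xᴴ * (Aᴴ * E * A)) := by
            rw [Matrix.mul_nonsing_inv F hFd, mul_one]; simp only [mul_assoc]
        _ = E⁻¹ * ((Aᴴ * E * A * X)ᴴ) := by
            simp only [conjTranspose_mul, conjTranspose_conjTranspose, hEherm, mul_assoc]
        _ = E⁻¹ * (Aᴴ * E)ᴴ := by rw [ha]
        _ = E⁻¹ * E * A := by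
            simp only [conjTranspose_mul, conjTranspose_conjTranspose, hEherm, mul_assoc]
        _ = A := by rw [Matrix.nonsing_inv_mul E hEd, one_mul]
  · rintro ⟨Y, Z, hY, hZ⟩
    -- basic consequences
    have f1 : A * F⁻¹ * Aᴴ * E * Z * A = A := by
      have e1 : A * F⁻¹ * Aᴴ * E * Z * A
          = A * F⁻¹ * Aᴴ * E * Z * (A * F⁻¹ * Aᴴ * E * A * Y) := by rw [hY]
      have e2 : A * F⁻¹ * Aᴴ * E * Z * (A * F⁻¹ * Aᴴ * E * A * Y)
          = A * F⁻¹ * Aᴴ * E * (Z * A * F⁻¹ * Aᴴ * E * A) * Y := by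
        simp only [mul_assoc]
      rw [e1, e2, hZ, hY]
    have f2 : A * Y * F⁻¹ * Aᴴ * E * A = A := by
      have e1 : A * Y * F⁻¹ * Aᴴ * E * A
          = (Z * A * F⁻¹ * Aᴴ * E * A) * Y * F⁻¹ * Aᴴ * E * A := by rw [hZ]
      have e2 : (Z * A * F⁻¹ * Aᴴ * E * A) * Y * F⁻¹ * Aᴴ * E * A
          = Z * (A * F⁻¹ * Aᴴ * E * A * Y) * F⁻¹ * Aᴴ * E * A := by
        simp only [mul_assoc]
      rw [e1, e2, hY, hZ]
    have f3p : A * F⁻¹ * Aᴴ * (E * Z * A * Y * F⁻¹) * Aᴴ * E * A = A := by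
      calc A * F⁻¹ * Aᴴ * (E * Z * A * Y * F⁻¹) * Aᴴ * E * A
          = (A * F⁻¹ * Aᴴ * E * Z * A) * (Y * F⁻¹ * Aᴴ * E * A) := by
            simp only [mul_assoc]
        _ = A * (Y * F⁻¹ * Aᴴ * E * A) := by rw [f1]
        _ = A * Y * F⁻¹ * Aᴴ * E * A := by simp only [mul_assoc]
        _ = A := f2
    -- generalized lemmas over an opaque middle matrix W
    have keyH : ∀ W : Matrix (Fin n) (Fin n) ℂ,
        A * F⁻¹ * Aᴴ * W * Aᴴ * E * A = A →
        Aᴴ * E * A * Wᴴ * A * F⁻¹ * Aᴴ = Aᴴ := by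
      intro W hW
      have := congrArg Matrix.conjTranspose hW
      simp only [conjTranspose_mul, conjTranspose_conjTranspose, hFi, hEherm,
        mul_assoc] at this ⊢
      exact this
    have ccsc : ∀ W : Matrix (Fin n) (Fin n) ℂ,
        A * F⁻¹ * Aᴴ * W * Aᴴ * E * A = A →
        (Aᴴ * E * A * F⁻¹ * Aᴴ) * W * (Aᴴ * E * A * F⁻¹ * Aᴴ)
          = Aᴴ * E * A * F⁻¹ * Aᴴ := by
      intro W hW
      calc (Aᴴ * E * A * F⁻¹ * Aᴴ) * W * (Aᴴ * E * A * F⁻¹ * Aᴴ)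
          = Aᴴ * E * (A * F⁻¹ * Aᴴ * W * Aᴴ * E * A) * F⁻¹ * Aᴴ := by
            simp only [mul_assoc]
        _ = Aᴴ * E * A * F⁻¹ * Aᴴ := by rw [hW]
    have gstep : ∀ W : Matrix (Fin n) (Fin n) ℂ,
        A * F⁻¹ * Aᴴ * W * Aᴴ * E * A = A →
        A * F⁻¹ * Aᴴ * (W * (Aᴴ * E * A * F⁻¹ * Aᴴ) * W) * Aᴴ * E * A = A := by
      intro W hW
      calc A * F⁻¹ * Aᴴ * (W * (Aᴴ * E * A * F⁻¹ * Aᴴ) * W) * Aᴴ * E * A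
          = (A * F⁻¹ * Aᴴ * W * Aᴴ * E * A) * (F⁻¹ * Aᴴ * W * Aᴴ * E * A) := by
            simp only [mul_assoc]
        _ = A * (F⁻¹ * Aᴴ * W * Aᴴ * E * A) := by rw [hW]
        _ = A * F⁻¹ * Aᴴ * W * Aᴴ * E * A := by simp only [mul_assoc]
        _ = A := hW
    have mono : ∀ s c : Matrix (Fin n) (Fin n) ℂ, c * s * c = c →
        (s * c * s) * c * (s * c * s) = s * c * s := by
      intro s c h
      calc (s * c * s) * c * (s * c * s)
          = s * (c * s * c) * (s * c * s) := by simp only [mul_assoc]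
        _ = s * c * (s * c * s) := by rw [h]
        _ = s * (c * s * c) * s := by simp only [mul_assoc]
        _ = s * c * s := by rw [h]
    have c1lem : ∀ W : Matrix (Fin n) (Fin n) ℂ,
        A * F⁻¹ * Aᴴ * W * Aᴴ * E * A = A →
        A * (F⁻¹ * Aᴴ * W * Aᴴ * E) * A = A := by
      intro W hW
      simp only [mul_assoc] at hW ⊢
      exact hW
    have c2lem : ∀ W : Matrix (Fin n) (Fin n) ℂ,
        W * (Aᴴ * E * A * F⁻¹ * Aᴴ) * W = W →
        (F⁻¹ * Aᴴ * W * Aᴴ * E) * A * (F⁻¹ * Aᴴ * W * Aᴴ * E)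
          = F⁻¹ * Aᴴ * W * Aᴴ * E := by
      intro W hW
      calc (F⁻¹ * Aᴴ * W * Aᴴ * E) * A * (F⁻¹ * Aᴴ * W * Aᴴ * E)
          = F⁻¹ * Aᴴ * (W * (Aᴴ * E * A * F⁻¹ * Aᴴ) * W) * (Aᴴ * E) := by
            simp only [mul_assoc]
        _ = F⁻¹ * Aᴴ * W * (Aᴴ * E) := by rw [hW]
        _ = F⁻¹ * Aᴴ * W * Aᴴ * E := by simp only [mul_assoc]
    have c3lem : ∀ W : Matrix (Fin n) (Fin n) ℂ,
        A * F⁻¹ * Aᴴ * W * Aᴴ * E * A = A →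
        (E * A * (F⁻¹ * Aᴴ * W * Aᴴ * E))ᴴ = E * A * (F⁻¹ * Aᴴ * W * Aᴴ * E) := by
      intro W hW
      have hAh := keyH W hW
      have lem : A * F⁻¹ * Aᴴ * W * Aᴴ = A * Wᴴ * A * F⁻¹ * Aᴴ := by
        calc A * F⁻¹ * Aᴴ * W * Aᴴ
            = A * F⁻¹ * Aᴴ * W * (Aᴴ * E * A * Wᴴ * A * F⁻¹ * Aᴴ) := by rw [hAh]
          _ = A * F⁻¹ * Aᴴ * W * Aᴴ * E * A * Wᴴ * A * F⁻¹ * Aᴴ := by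
              simp only [mul_assoc]
          _ = A * Wᴴ * A * F⁻¹ * Aᴴ := by rw [hW]
      have h' : (E * A * (F⁻¹ * Aᴴ * W * Aᴴ * E))ᴴ
          = E * (A * Wᴴ * A * F⁻¹ * Aᴴ) * E := by
        simp only [conjTranspose_mul, conjTranspose_conjTranspose, hEherm, hFi,
          mul_assoc]
      rw [h', ← lem]
      simp only [mul_assoc]
    have c4lem : ∀ W : Matrix (Fin n) (Fin n) ℂ,
        A * F⁻¹ * Aᴴ * W * Aᴴ * E * A = A →
        (F * (F⁻¹ * Aᴴ * W * Aᴴ * E) * A)ᴴ = F * (F⁻¹ * Aᴴ * W * Aᴴ * E) * A := by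
      intro W hW
      have hAh := keyH W hW
      have lem2 : Aᴴ * W * Aᴴ * E * A = Aᴴ * E * A * Wᴴ * A := by
        calc Aᴴ * W * Aᴴ * E * A
            = (Aᴴ * E * A * Wᴴ * A * F⁻¹ * Aᴴ) * W * Aᴴ * E * A := by rw [hAh]
          _ = Aᴴ * E * A * Wᴴ * (A * F⁻¹ * Aᴴ * W * Aᴴ * E * A) := by
              simp only [mul_assoc]
          _ = Aᴴ * E * A * Wᴴ * A := by rw [hW]
      have hFF : F * (F⁻¹ * Aᴴ * W * Aᴴ * E) * A = Aᴴ * W * Aᴴ * E * A := by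
        calc F * (F⁻¹ * Aᴴ * W * Aᴴ * E) * A
            = F * F⁻¹ * (Aᴴ * W * Aᴴ * E * A) := by simp only [mul_assoc]
          _ = Aᴴ * W * Aᴴ * E * A := by
              rw [Matrix.mul_nonsing_inv F hFd, one_mul]
      rw [hFF]
      have h' : (Aᴴ * W * Aᴴ * E * A)ᴴ = Aᴴ * E * A * Wᴴ * A := by
        simp only [conjTranspose_mul, conjTranspose_conjTranspose, hEherm, mul_assoc]
      rw [h']
      exact lem2.symm
    -- assemble
    have g0 := ccsc (E * Z * A * Y * F⁻¹) f3p
    have hWS := gstep (E * Z * A * Y * F⁻¹) f3p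
    refine ⟨F⁻¹ * Aᴴ * ((E * Z * A * Y * F⁻¹) * (Aᴴ * E * A * F⁻¹ * Aᴴ) *
        (E * Z * A * Y * F⁻¹)) * Aᴴ * E, ?_, ?_, ?_, ?_⟩
    · exact c1lem _ hWS
    · exact c2lem _ (mono (E * Z * A * Y * F⁻¹) (Aᴴ * E * A * F⁻¹ * Aᴴ) g0)
    · exact c3lem _ hWS
    · exact c4lem _ hWS
end

section
/- Let A, B, E be n×n complex matrices with E invertible and Hermitian, and suppose A^*·E·B = 0 and A·B = 0 = B·A. Let k be a positive integer, let X be an E-weighted core-EP inverse of A with exponent k (X·A^(k+1) = A^k, A·X^2 = X, (E·A·X)^* = E·A·X), and let Y be an E-weighted core-EP inverse of B with exponent k. Then X + Y is an E-weighted core-EP inverse of A + B with exponent k, and X − Y is an E-weighted core-EP inverse of A − B with exponent k. -/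
open Matrix

private lemma aux_sum {n : ℕ} (A B E X Y : Matrix (Fin n) (Fin n) ℂ) (k : ℕ) (hk : 0 < k)
    (hE : IsUnit E) (hEherm : Eᴴ = E)
    (hAB : Aᴴ * E * B = 0) (hAB1 : A * B = 0) (hAB2 : B * A = 0)
    (hX6 : X * A ^ (k + 1) = A ^ k) (hX7 : A * X ^ 2 = X)
    (hX3 : (E * A * X)ᴴ = E * A * X)
    (hY6 : Y * B ^ (k + 1) = B ^ k) (hY7 : B * Y ^ 2 = Y)
    (hY3 : (E * B * Y)ᴴ = E * B * Y) :
    (X + Y) * (A + B) ^ (k + 1) = (A + B) ^ k ∧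
     (A + B) * (X + Y) ^ 2 = X + Y ∧
     (E * (A + B) * (X + Y))ᴴ = E * (A + B) * (X + Y) := by
  have hEd : IsUnit E.det := (Matrix.isUnit_iff_isUnit_det E).mp hE
  have hEinv : E⁻¹ * E = 1 := Matrix.nonsing_inv_mul E hEd
  -- Bᴴ * E * A = 0
  have hBEA : Bᴴ * E * A = 0 := by
    have h := congrArg conjTranspose hAB
    simpa [Matrix.conjTranspose_mul, hEherm, Matrix.mul_assoc] using h
  -- A * X * B = 0
  have hAXB : A * X * B = 0 := by
    have h1 : E * (A * X * B) = 0 := by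
      calc E * (A * X * B) = (E * A * X) * B := by
            simp [Matrix.mul_assoc]
        _ = (E * A * X)ᴴ * B := by rw [hX3]
        _ = Xᴴ * (Aᴴ * E * B) := by
            simp [Matrix.conjTranspose_mul, hEherm, Matrix.mul_assoc]
        _ = 0 := by rw [hAB, mul_zero]
    calc A * X * B = (E⁻¹ * E) * (A * X * B) := by rw [hEinv, one_mul]
      _ = E⁻¹ * (E * (A * X * B)) := by rw [Matrix.mul_assoc]
      _ = 0 := by rw [h1, mul_zero]
  -- B * Y * A = 0
  have hBYA : B * Y * A = 0 := by
    have h1 : E * (B * Y * A) = 0 := by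
      calc E * (B * Y * A) = (E * B * Y) * A := by
            simp [Matrix.mul_assoc]
        _ = (E * B * Y)ᴴ * A := by rw [hY3]
        _ = Yᴴ * (Bᴴ * E * A) := by
            simp [Matrix.conjTranspose_mul, hEherm, Matrix.mul_assoc]
        _ = 0 := by rw [hBEA, mul_zero]
    calc B * Y * A = (E⁻¹ * E) * (B * Y * A) := by rw [hEinv, one_mul]
      _ = E⁻¹ * (E * (B * Y * A)) := by rw [Matrix.mul_assoc]
      _ = 0 := by rw [h1, mul_zero]
  -- X = A^m * X^(m+1)
  have hXm : ∀ m, A ^ m * X ^ (m + 1) = X := by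
    intro m
    induction m with
    | zero => simp
    | succ m ih =>
        calc A ^ (m + 1) * X ^ (m + 2)
            = (A * A ^ m) * (X ^ (m + 1) * X) := by rw [pow_succ', pow_succ]
          _ = A * ((A ^ m * X ^ (m + 1)) * X) := by
              simp [Matrix.mul_assoc]
          _ = A * (X * X) := by rw [ih]
          _ = A * X ^ 2 := by rw [pow_two]
          _ = X := hX7
  have hYm : ∀ m, B ^ m * Y ^ (m + 1) = Y := by
    intro m
    induction m with
    | zero => simp
    | succ m ih =>
        calc B ^ (m + 1) * Y ^ (m + 2)
            = (B * B ^ m) * (Y ^ (m + 1) * Y) := by rw [pow_succ', pow_succ]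
          _ = B * ((B ^ m * Y ^ (m + 1)) * Y) := by
              simp [Matrix.mul_assoc]
          _ = B * (Y * Y) := by rw [ih]
          _ = B * Y ^ 2 := by rw [pow_two]
          _ = Y := hY7
  -- X * A * X = X
  have hXAX : X * A * X = X := by
    calc X * A * X = X * A * (A ^ k * X ^ (k + 1)) := by rw [hXm k]
      _ = (X * (A * A ^ k)) * X ^ (k + 1) := by simp [Matrix.mul_assoc]
      _ = (X * A ^ (k + 1)) * X ^ (k + 1) := by rw [← pow_succ']
      _ = A ^ k * X ^ (k + 1) := by rw [hX6]
      _ = X := hXm k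
  have hYBY : Y * B * Y = Y := by
    calc Y * B * Y = Y * B * (B ^ k * Y ^ (k + 1)) := by rw [hYm k]
      _ = (Y * (B * B ^ k)) * Y ^ (k + 1) := by simp [Matrix.mul_assoc]
      _ = (Y * B ^ (k + 1)) * Y ^ (k + 1) := by rw [← pow_succ']
      _ = B ^ k * Y ^ (k + 1) := by rw [hY6]
      _ = Y := hYm k
  -- the orthogonality relations
  have hXB : X * B = 0 := by
    calc X * B = (X * A * X) * B := by rw [hXAX]
      _ = X * (A * X * B) := by simp [Matrix.mul_assoc]
      _ = 0 := by rw [hAXB, mul_zero]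
  have hYA : Y * A = 0 := by
    calc Y * A = (Y * B * Y) * A := by rw [hYBY]
      _ = Y * (B * Y * A) := by simp [Matrix.mul_assoc]
      _ = 0 := by rw [hBYA, mul_zero]
  have hAY : A * Y = 0 := by
    calc A * Y = A * (B * Y ^ 2) := by rw [hY7]
      _ = (A * B) * Y ^ 2 := by rw [Matrix.mul_assoc]
      _ = 0 := by rw [hAB1, zero_mul]
  have hBX : B * X = 0 := by
    calc B * X = B * (A * X ^ 2) := by rw [hX7]
      _ = (B * A) * X ^ 2 := by rw [Matrix.mul_assoc]
      _ = 0 := by rw [hAB2, zero_mul]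
  have hXY : X * Y = 0 := by
    calc X * Y = X * (B * Y ^ 2) := by rw [hY7]
      _ = (X * B) * Y ^ 2 := by rw [Matrix.mul_assoc]
      _ = 0 := by rw [hXB, zero_mul]
  have hYX : Y * X = 0 := by
    calc Y * X = Y * (A * X ^ 2) := by rw [hX7]
      _ = (Y * A) * X ^ 2 := by rw [Matrix.mul_assoc]
      _ = 0 := by rw [hYA, zero_mul]
  -- binomial collapse
  have hpow : ∀ m, (A + B) ^ (m + 1) = A ^ (m + 1) + B ^ (m + 1) := by
    intro m
    induction m with
    | zero => simp
    | succ m ih =>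
        have hA : A ^ (m + 1) * B = 0 := by
          rw [pow_succ, Matrix.mul_assoc, hAB1, mul_zero]
        have hB : B ^ (m + 1) * A = 0 := by
          rw [pow_succ, Matrix.mul_assoc, hAB2, mul_zero]
        calc (A + B) ^ (m + 2) = (A + B) ^ (m + 1) * (A + B) := by rw [pow_succ]
          _ = (A ^ (m + 1) + B ^ (m + 1)) * (A + B) := by rw [ih]
          _ = A ^ (m + 1) * A + A ^ (m + 1) * B + (B ^ (m + 1) * A + B ^ (m + 1) * B) := by
              rw [add_mul, mul_add, mul_add]
          _ = A ^ (m + 2) + B ^ (m + 2) := by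
              rw [hA, hB, ← pow_succ, ← pow_succ]; abel
  obtain ⟨m, rfl⟩ : ∃ m, k = m + 1 := ⟨k - 1, (Nat.succ_pred_eq_of_pos hk).symm⟩
  have hXBk : X * B ^ (m + 1 + 1) = 0 := by
    rw [pow_succ', ← Matrix.mul_assoc, hXB, zero_mul]
  have hYAk : Y * A ^ (m + 1 + 1) = 0 := by
    rw [pow_succ', ← Matrix.mul_assoc, hYA, zero_mul]
  refine ⟨?_, ?_, ?_⟩
  · rw [hpow (m + 1), hpow m, add_mul, mul_add, mul_add, hX6, hY6, hXBk, hYAk]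
    abel
  · have e1 : (X + Y) ^ 2 = X ^ 2 + Y ^ 2 := by
      rw [pow_two, pow_two, pow_two, add_mul, mul_add, mul_add, hXY, hYX]
      abel
    have hAY2 : A * Y ^ 2 = 0 := by
      rw [pow_two, ← Matrix.mul_assoc, hAY, zero_mul]
    have hBX2 : B * X ^ 2 = 0 := by
      rw [pow_two, ← Matrix.mul_assoc, hBX, zero_mul]
    rw [e1, add_mul, mul_add, mul_add, hX7, hY7, hAY2, hBX2]
    abel
  · have e2 : E * (A + B) * (X + Y) = E * A * X + E * B * Y := by
      rw [mul_add E A B, add_mul, mul_add, mul_add]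
      rw [Matrix.mul_assoc E A Y, hAY, mul_zero, Matrix.mul_assoc E B X, hBX, mul_zero]
      abel
    rw [e2, conjTranspose_add, hX3, hY3]

/-- Additive property of the E-weighted core-EP inverse. -/
theorem stmt_16 {n : ℕ} (A B E X Y : Matrix (Fin n) (Fin n) ℂ) (k : ℕ) (hk : 0 < k)
    (hE : IsUnit E) (hEherm : Eᴴ = E)
    (hAB : Aᴴ * E * B = 0) (hAB1 : A * B = 0) (hAB2 : B * A = 0)
    (hX6 : X * A ^ (k + 1) = A ^ k) (hX7 : A * X ^ 2 = X)
    (hX3 : (E * A * X)ᴴ = E * A * X)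
    (hY6 : Y * B ^ (k + 1) = B ^ k) (hY7 : B * Y ^ 2 = Y)
    (hY3 : (E * B * Y)ᴴ = E * B * Y) :
    ((X + Y) * (A + B) ^ (k + 1) = (A + B) ^ k ∧
     (A + B) * (X + Y) ^ 2 = X + Y ∧
     (E * (A + B) * (X + Y))ᴴ = E * (A + B) * (X + Y)) ∧
    ((X - Y) * (A - B) ^ (k + 1) = (A - B) ^ k ∧
     (A - B) * (X - Y) ^ 2 = X - Y ∧
     (E * (A - B) * (X - Y))ᴴ = E * (A - B) * (X - Y)) := by
  constructor
  · exact aux_sum A B E X Y k hk hE hEherm hAB hAB1 hAB2 hX6 hX7 hX3 hY6 hY7 hY3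
  · have h1 : Aᴴ * E * (-B) = 0 := by rw [mul_neg, hAB, neg_zero]
    have h2 : A * (-B) = 0 := by rw [mul_neg, hAB1, neg_zero]
    have h3 : (-B) * A = 0 := by rw [neg_mul, hAB2, neg_zero]
    have h4 : (-Y) * (-B) ^ (k + 1) = (-B) ^ k := by
      rcases Nat.even_or_odd k with he | ho
      · rw [he.neg_pow, he.add_one.neg_pow, neg_mul_neg, hY6]
      · rw [ho.neg_pow, ho.add_one.neg_pow, neg_mul, hY6]
    have h5 : (-B) * (-Y) ^ 2 = -Y := by rw [neg_sq, neg_mul, hY7]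
    have h6 : (E * (-B) * (-Y))ᴴ = E * (-B) * (-Y) := by
      have hne : E * (-B) * (-Y) = E * B * Y := by noncomm_ring
      rw [hne, hY3]
    have H := aux_sum A (-B) E X (-Y) k hk hE hEherm h1 h2 h3 hX6 hX7 hX3 h4 h5 h6
    simpa [sub_eq_add_neg] using H
end

section
/- Let A, E be n×n complex matrices with E invertible and Hermitian, let k be a positive integer, let D be a Moore–Penrose inverse of A (A·D·A = A, D·A·D = D, (A·D)^* = A·D, (D·A)^* = D·A), and let C be an E-weighted core-EP inverse of A with exponent k (C·A^(k+1) = A^k, A·C^2 = C, (E·A·C)^* = E·A·C). Then X₀ = A^*·A·C is the unique n×n complex matrix X satisfying the system X·D^*·X = X, X·A^k = A^*·A^k, and D^*·X = A·C. -/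
open Matrix

/-- X₀ = Aᴴ·A·C is the unique solution of the system X·Dᴴ·X = X,
X·A^k = Aᴴ·A^k, Dᴴ·X = A·C. -/
theorem stmt_17 {n : ℕ} (A E D C : Matrix (Fin n) (Fin n) ℂ) (k : ℕ) (hk : 0 < k)
    (hE : IsUnit E) (hEherm : Eᴴ = E)
    (hD1 : A * D * A = A) (hD2 : D * A * D = D)
    (hD3 : (A * D)ᴴ = A * D) (hD4 : (D * A)ᴴ = D * A)
    (hC6 : C * A ^ (k + 1) = A ^ k) (hC7 : A * C ^ 2 = C)
    (hC3 : (E * A * C)ᴴ = E * A * C) :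
    (Aᴴ * A * C * Dᴴ * (Aᴴ * A * C) = Aᴴ * A * C ∧
     Aᴴ * A * C * A ^ k = Aᴴ * A ^ k ∧
     Dᴴ * (Aᴴ * A * C) = A * C) ∧
    ∀ X : Matrix (Fin n) (Fin n) ℂ,
      X * Dᴴ * X = X → X * A ^ k = Aᴴ * A ^ k → Dᴴ * X = A * C →
      X = Aᴴ * A * C := by
  -- Dᴴ * Aᴴ = A * D
  have hDA : Dᴴ * Aᴴ = A * D := by
    rw [← conjTranspose_mul, hD3]
  have hcomm : A * A ^ k = A ^ k * A := (pow_succ' A k).symm.trans (pow_succ A k)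
  -- key : A ^ m * C ^ (m + 1) = C
  have key : ∀ m : ℕ, A ^ m * C ^ (m + 1) = C := by
    intro m
    induction m with
    | zero => simp
    | succ m ih =>
      have h2 : C ^ (m + 1 + 1) = C ^ 2 * C ^ m := by
        rw [← pow_add]; ring_nf
      calc A ^ (m + 1) * C ^ (m + 1 + 1)
          = A ^ m * (A * C ^ 2) * C ^ m := by
            rw [h2, pow_succ]; noncomm_ring
        _ = A ^ m * C ^ (m + 1) := by rw [hC7, pow_succ']; noncomm_ring
        _ = C := ih
  -- C * A * C = C
  have hCAC : C * A * C = C := by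
    calc C * A * C = C * A * (A ^ k * C ^ (k + 1)) := by rw [key]
      _ = C * (A * A ^ k) * C ^ (k + 1) := by noncomm_ring
      _ = C * A ^ (k + 1) * C ^ (k + 1) := by rw [← pow_succ']
      _ = A ^ k * C ^ (k + 1) := by rw [hC6]
      _ = C := key k
  -- part 3 : Dᴴ * (Aᴴ * A * C) = A * C
  have h3 : Dᴴ * (Aᴴ * A * C) = A * C := by
    calc Dᴴ * (Aᴴ * A * C) = (Dᴴ * Aᴴ) * A * C := by noncomm_ring
      _ = A * D * A * C := by rw [hDA]
      _ = A * C := by rw [hD1]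
  -- part 1
  have h1 : Aᴴ * A * C * Dᴴ * (Aᴴ * A * C) = Aᴴ * A * C := by
    calc Aᴴ * A * C * Dᴴ * (Aᴴ * A * C)
        = Aᴴ * A * C * (Dᴴ * (Aᴴ * A * C)) := by rw [mul_assoc]
      _ = Aᴴ * A * C * (A * C) := by rw [h3]
      _ = Aᴴ * A * (C * A * C) := by noncomm_ring
      _ = Aᴴ * A * C := by rw [hCAC]
  -- part 2 : A * C * A ^ k = A ^ k
  have h2 : Aᴴ * A * C * A ^ k = Aᴴ * A ^ k := by
    have : A * C * A ^ k = A ^ k := by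
      calc A * C * A ^ k = A * C * (C * A ^ (k + 1)) := by rw [hC6]
        _ = A * C ^ 2 * A ^ (k + 1) := by rw [sq]; noncomm_ring
        _ = C * A ^ (k + 1) := by rw [hC7]
        _ = A ^ k := hC6
    calc Aᴴ * A * C * A ^ k = Aᴴ * (A * C * A ^ k) := by noncomm_ring
      _ = Aᴴ * A ^ k := by rw [this]
  refine ⟨⟨h1, h2, h3⟩, ?_⟩
  intro X hX1 hX2 hX3
  calc X = X * Dᴴ * X := hX1.symm
    _ = X * (Dᴴ * X) := by rw [mul_assoc]
    _ = X * (A * C) := by rw [hX3]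
    _ = X * (A * (A ^ k * C ^ (k + 1))) := by rw [key]
    _ = X * (A ^ (k + 1) * C ^ (k + 1)) := by rw [← mul_assoc A, ← pow_succ']
    _ = X * (A ^ k * A * C ^ (k + 1)) := by rw [pow_succ]
    _ = X * A ^ k * (A * C ^ (k + 1)) := by noncomm_ring
    _ = Aᴴ * A ^ k * (A * C ^ (k + 1)) := by rw [hX2]
    _ = Aᴴ * (A ^ k * A * C ^ (k + 1)) := by noncomm_ring
    _ = Aᴴ * (A ^ (k + 1) * C ^ (k + 1)) := by rw [← pow_succ]
    _ = Aᴴ * A * (A ^ k * C ^ (k + 1)) := by rw [pow_succ' A k]; noncomm_ring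
    _ = Aᴴ * A * C := by rw [key]
end

section
/- Let A, E be n×n complex matrices with E invertible and Hermitian, let k be a positive integer, let D be a Moore–Penrose inverse of A (A·D·A = A, D·A·D = D, (A·D)^* = A·D, (D·A)^* = D·A), and let C be an E-weighted core-EP inverse of A with exponent k (C·A^(k+1) = A^k, A·C^2 = C, (E·A·C)^* = E·A·C). For an n×n complex matrix X, the following are equivalent: (i) X = A^*·A·C (X is the star E-weighted core-EP matrix of A); (ii) X·A·C = X and X·A^k = A^*·A^k; (iii) D·A·X = X and D^*·X = A·C. -/
open Matrix

/-- Characterizations of the star E-weighted core-EP matrix Aᴴ·A·C. -/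
theorem stmt_18 {n : ℕ} (A E D C : Matrix (Fin n) (Fin n) ℂ) (k : ℕ) (hk : 0 < k)
    (hE : IsUnit E) (hEherm : Eᴴ = E)
    (hD1 : A * D * A = A) (hD2 : D * A * D = D)
    (hD3 : (A * D)ᴴ = A * D) (hD4 : (D * A)ᴴ = D * A)
    (hC6 : C * A ^ (k + 1) = A ^ k) (hC7 : A * C ^ 2 = C)
    (hC3 : (E * A * C)ᴴ = E * A * C) (X : Matrix (Fin n) (Fin n) ℂ) :
    (X = Aᴴ * A * C ↔ (X * A * C = X ∧ X * A ^ k = Aᴴ * A ^ k)) ∧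
    (X = Aᴴ * A * C ↔ (D * A * X = X ∧ Dᴴ * X = A * C)) := by
  -- C = A^m * C^(m+1) for all m
  have h1 : ∀ m : ℕ, A ^ m * C ^ (m + 1) = C := by
    intro m
    induction m with
    | zero => simp
    | succ m ih =>
      have hc : C ^ (m + 1 + 1) = C ^ 2 * C ^ m := by
        rw [show m + 1 + 1 = 2 + m from by omega, pow_add]
      rw [pow_succ, hc, mul_assoc, ← mul_assoc A, hC7, ← pow_succ']
      exact ih
  have hPAk1 : A * C * A ^ (k + 1) = A ^ (k + 1) := by
    rw [mul_assoc, hC6, ← pow_succ']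
  have hACalt : A * C = A ^ k * (A * C ^ (k + 1)) := by
    conv_lhs => rw [← h1 k]
    rw [← mul_assoc, ← mul_assoc, ← pow_succ', ← pow_succ]
  -- A*C*A^k = A^k
  have hPAk : A * C * A ^ k = A ^ k := by
    conv_lhs => rw [← hC6]
    rw [← mul_assoc, mul_assoc A C C, ← sq, hC7, hC6]
  -- A*C is idempotent
  have hPAC : A * C * (A * C) = A * C := by
    nth_rewrite 2 [hACalt]
    rw [← mul_assoc, hPAk, ← hACalt]
  have hDhAh : Dᴴ * Aᴴ = A * D := by rw [← conjTranspose_mul, hD3]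
  have hAhDh : Aᴴ * Dᴴ = D * A := by rw [← conjTranspose_mul, hD4]
  have hDAA : D * A * Aᴴ = Aᴴ := by
    calc D * A * Aᴴ = (D * A)ᴴ * Aᴴ := by rw [hD4]
      _ = (A * (D * A))ᴴ := (conjTranspose_mul _ _).symm
      _ = Aᴴ := by rw [← mul_assoc, hD1]
  constructor
  · constructor
    · rintro rfl
      constructor
      · calc Aᴴ * A * C * A * C = Aᴴ * (A * C * (A * C)) := by
              simp only [mul_assoc]
          _ = Aᴴ * (A * C) := by rw [hPAC]
          _ = Aᴴ * A * C := by rw [mul_assoc]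
      · calc Aᴴ * A * C * A ^ k = Aᴴ * (A * C * A ^ k) := by
              simp only [mul_assoc]
          _ = Aᴴ * A ^ k := by rw [hPAk]
    · rintro ⟨hx1, hx2⟩
      calc X = X * A * C := hx1.symm
        _ = X * (A ^ k * (A * C ^ (k + 1))) := by rw [mul_assoc, hACalt]
        _ = X * A ^ k * (A * C ^ (k + 1)) := by rw [mul_assoc]
        _ = Aᴴ * A ^ k * (A * C ^ (k + 1)) := by rw [hx2]
        _ = Aᴴ * (A ^ k * (A * C ^ (k + 1))) := by rw [mul_assoc]
        _ = Aᴴ * (A * C) := by rw [← hACalt]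
        _ = Aᴴ * A * C := by rw [mul_assoc]
  · constructor
    · rintro rfl
      constructor
      · rw [← mul_assoc, ← mul_assoc, hDAA]
      · rw [← mul_assoc, ← mul_assoc, hDhAh, hD1]
    · rintro ⟨hx1, hx2⟩
      calc X = D * A * X := hx1.symm
        _ = Aᴴ * Dᴴ * X := by rw [hAhDh]
        _ = Aᴴ * (Dᴴ * X) := by rw [mul_assoc]
        _ = Aᴴ * (A * C) := by rw [hx2]
        _ = Aᴴ * A * C := by rw [mul_assoc]
end

section
/- Let A, E be n×n complex matrices with E invertible and Hermitian, let k be a positive integer, let D be a Moore–Penrose inverse of A (A·D·A = A, D·A·D = D, (A·D)^* = A·D, (D·A)^* = D·A), let C be an E-weighted core-EP inverse of A with exponent k (C·A^(k+1) = A^k, A·C^2 = C, (E·A·C)^* = E·A·C), and set X = A^*·A·C. Then: (i) (D^*·X)^2 = D^*·X, the column space of D^*·X equals the column space of A^k, and the null space of D^*·X equals the null space of C; (ii) (X·D^*)^2 = X·D^*, the column space of X·D^* equals the column space of A^*·A^k, and the null space of X·D^* equals the null space of C·D^*; (iii) X·D^*·X = X, the column space of X equals the column space of A^*·A^k, and the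 null space of X equals the null space of C. -/
open Matrix

private lemma range_factor {n : ℕ} {M P Q : Matrix (Fin n) (Fin n) ℂ} (h : M = P * Q) :
    LinearMap.range M.mulVecLin ≤ LinearMap.range P.mulVecLin := by
  rw [h, Matrix.mulVecLin_mul]
  exact LinearMap.range_comp_le_range _ _

private lemma ker_factor {n : ℕ} {M P Q : Matrix (Fin n) (Fin n) ℂ} (h : M = P * Q) :
    LinearMap.ker Q.mulVecLin ≤ LinearMap.ker M.mulVecLin := by
  rw [h, Matrix.mulVecLin_mul]
  intro x hx
  simp only [LinearMap.mem_ker] at hx ⊢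
  simp [hx]

/-- Projector properties of the star E-weighted core-EP matrix X = Aᴴ·A·C. -/
theorem stmt_19 {n : ℕ} (A E D C : Matrix (Fin n) (Fin n) ℂ) (k : ℕ) (hk : 0 < k)
    (hE : IsUnit E) (hEherm : Eᴴ = E)
    (hD1 : A * D * A = A) (hD2 : D * A * D = D)
    (hD3 : (A * D)ᴴ = A * D) (hD4 : (D * A)ᴴ = D * A)
    (hC6 : C * A ^ (k + 1) = A ^ k) (hC7 : A * C ^ 2 = C)
    (hC3 : (E * A * C)ᴴ = E * A * C) :
    ((Dᴴ * (Aᴴ * A * C)) ^ 2 = Dᴴ * (Aᴴ * A * C) ∧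
     LinearMap.range (Dᴴ * (Aᴴ * A * C)).mulVecLin =
       LinearMap.range (A ^ k).mulVecLin ∧
     LinearMap.ker (Dᴴ * (Aᴴ * A * C)).mulVecLin = LinearMap.ker C.mulVecLin) ∧
    ((Aᴴ * A * C * Dᴴ) ^ 2 = Aᴴ * A * C * Dᴴ ∧
     LinearMap.range (Aᴴ * A * C * Dᴴ).mulVecLin =
       LinearMap.range (Aᴴ * A ^ k).mulVecLin ∧
     LinearMap.ker (Aᴴ * A * C * Dᴴ).mulVecLin = LinearMap.ker (C * Dᴴ).mulVecLin) ∧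
    (Aᴴ * A * C * Dᴴ * (Aᴴ * A * C) = Aᴴ * A * C ∧
     LinearMap.range (Aᴴ * A * C).mulVecLin =
       LinearMap.range (Aᴴ * A ^ k).mulVecLin ∧
     LinearMap.ker (Aᴴ * A * C).mulVecLin = LinearMap.ker C.mulVecLin) := by
  -- C = A^m * C^(m+1)
  have hCm : ∀ m : ℕ, A ^ m * C ^ (m + 1) = C := by
    intro m
    induction m with
    | zero => simp
    | succ m ih =>
      have h1 : A ^ (m + 1) * C ^ (m + 2) = A ^ m * (A * C ^ 2) * C ^ m := by
        rw [pow_succ, show m + 2 = 2 + m by ring, pow_add]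
        simp only [mul_assoc]
      rw [h1, hC7]
      have h2 : A ^ m * C * C ^ m = A ^ m * C ^ (m + 1) := by
        rw [show m + 1 = 1 + m by ring, pow_add, pow_one, mul_assoc]
      rw [h2, ih]
  -- Dᴴ * Aᴴ = A * D
  have hDA : Dᴴ * Aᴴ = A * D := by rw [← conjTranspose_mul, hD3]
  -- Dᴴ * X = A * C
  have hDX : Dᴴ * (Aᴴ * A * C) = A * C := by
    calc Dᴴ * (Aᴴ * A * C) = (Dᴴ * Aᴴ) * A * C := by simp only [mul_assoc]
    _ = A * D * A * C := by rw [hDA]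
    _ = A * C := by rw [hD1]
  -- C * (A * C) = C
  have hCAC : C * (A * C) = C := by
    conv_lhs => rw [show A * C = A * (A ^ k * C ^ (k + 1)) by rw [hCm k]]
    calc C * (A * (A ^ k * C ^ (k + 1))) = (C * A ^ (k + 1)) * C ^ (k + 1) := by
          rw [pow_succ' A k]; simp only [mul_assoc]
    _ = A ^ k * C ^ (k + 1) := by rw [hC6]
    _ = C := hCm k
  -- (A*C) idempotent
  have hACidem : (A * C) * (A * C) = A * C := by
    rw [mul_assoc, hCAC]
  -- (A*C) * A^k = A^k
  have hACAk : (A * C) * A ^ k = A ^ k := by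
    calc (A * C) * A ^ k = A * C * (C * A ^ (k + 1)) := by rw [hC6]
    _ = (A * C ^ 2) * A ^ (k + 1) := by rw [sq]; simp only [mul_assoc]
    _ = C * A ^ (k + 1) := by rw [hC7]
    _ = A ^ k := hC6
  -- A * C = A ^ k * (A * C ^ (k+1))
  have hACfac : A * C = A ^ k * (A * C ^ (k + 1)) := by
    conv_lhs => rw [← hCm k]
    calc A * (A ^ k * C ^ (k + 1)) = (A * A ^ k) * C ^ (k + 1) := by simp only [mul_assoc]
    _ = (A ^ k * A) * C ^ (k + 1) := by rw [Commute.self_pow A k]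
    _ = A ^ k * (A * C ^ (k + 1)) := by simp only [mul_assoc]
  -- C = C * (Dᴴ * X)
  have hCfac : C = C * Dᴴ * (Aᴴ * A * C) := by
    rw [mul_assoc, hDX, hCAC]
  -- X = (Aᴴ * A ^ k) * (A * C ^ (k+1))
  have hXfac : Aᴴ * A * C = (Aᴴ * A ^ k) * (A * C ^ (k + 1)) := by
    calc Aᴴ * A * C = Aᴴ * (A * C) := by simp only [mul_assoc]
    _ = Aᴴ * (A ^ k * (A * C ^ (k + 1))) := by rw [hACfac]
    _ = (Aᴴ * A ^ k) * (A * C ^ (k + 1)) := by simp only [mul_assoc]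
  -- Aᴴ * A ^ k = X * A ^ k
  have hAAkfac : Aᴴ * A ^ k = (Aᴴ * A * C) * A ^ k := by
    calc Aᴴ * A ^ k = Aᴴ * ((A * C) * A ^ k) := by rw [hACAk]
    _ = (Aᴴ * A * C) * A ^ k := by simp only [mul_assoc]
  -- X * Dᴴ * X = X
  have hXDX : Aᴴ * A * C * Dᴴ * (Aᴴ * A * C) = Aᴴ * A * C := by
    calc Aᴴ * A * C * Dᴴ * (Aᴴ * A * C) = Aᴴ * A * (C * (Dᴴ * (Aᴴ * A * C))) := by
          simp only [mul_assoc]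
    _ = Aᴴ * A * (C * (A * C)) := by rw [hDX]
    _ = Aᴴ * A * C := by rw [hCAC]
  have hrX : LinearMap.range (Aᴴ * A * C).mulVecLin =
      LinearMap.range (Aᴴ * A ^ k).mulVecLin :=
    le_antisymm (range_factor hXfac) (range_factor hAAkfac)
  refine ⟨⟨?_, ?_, ?_⟩, ⟨?_, ?_, ?_⟩, hXDX, hrX, ?_⟩
  · rw [sq, hDX, hACidem, ← hDX]
  · rw [hDX]
    exact le_antisymm (range_factor hACfac) (range_factor hACAk.symm)
  · rw [hDX]
    exact le_antisymm (ker_factor hCAC.symm) (ker_factor rfl)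
  · calc (Aᴴ * A * C * Dᴴ) ^ 2 = (Aᴴ * A * C * Dᴴ * (Aᴴ * A * C)) * Dᴴ := by
          rw [sq]; simp only [mul_assoc]
    _ = Aᴴ * A * C * Dᴴ := by rw [hXDX]
  · rw [← hrX]
    exact le_antisymm (range_factor rfl) (range_factor hXDX.symm)
  · have h1 : C * Dᴴ = (C * Dᴴ) * (Aᴴ * A * C * Dᴴ) := by
      calc C * Dᴴ = (C * Dᴴ * (Aᴴ * A * C)) * Dᴴ := by rw [← hCfac]
      _ = (C * Dᴴ) * (Aᴴ * A * C * Dᴴ) := by simp only [mul_assoc]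
    have h2 : Aᴴ * A * C * Dᴴ = (Aᴴ * A) * (C * Dᴴ) := by simp only [mul_assoc]
    exact le_antisymm (ker_factor h1) (ker_factor h2)
  · exact le_antisymm (ker_factor hCfac) (ker_factor rfl)
end
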